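/- arXiv:1905.00821 — 10 statements merged into one kernel-verified Lean document; each statement's English description precedes it below -/
import Mathlib

section
/- Let (u_n) be a non-increasing sequence of positive real numbers converging to 0. Let α > 1 and C > 0, and suppose that for all sufficiently large n one has u_n − u_{n+1} ≤ C·u_n^α. Then liminf_{n→∞} n^{1/(α−1)}·u_n ≥ (C(α−1))^{−1/(α−1)}. -/
open Filter Topology

/-! With `γ = α - 1`, the sequence `v n = u n ^ (-γ)` has increments asymptotically at most `C γ`:
the recursion gives `u (n+1) ≥ u n (1 - t)` with `t = C u n ^ γ → 0`, so
`v (n+1) ≤ v n (1 - t) ^ (-γ) = v n + C ((1 - t) ^ (-γ) - 1) / t`, and the last quotient tends to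
`γ`. Hence, for every `K > C γ`, eventually `v n ≤ A + n K`, i.e. `n ^ (1/γ) u n ≥ (n / (A + n K)) ^ (1/γ)`,
whose limit is `K ^ (-1/γ)`. -/

theorem tendsto_one_sub_rpow_sub_one_div (p : ℝ) :
    Tendsto (fun t : ℝ => ((1 - t) ^ p - 1) / t) (𝓝[≠] 0) (𝓝 (-p)) := by
  have hderiv : HasDerivAt (fun t : ℝ => (1 - t) ^ p) (-p) 0 := by
    simpa using ((hasDerivAt_id (0 : ℝ)).const_sub 1).rpow_const (p := p) (by norm_num)
  refine (hasDerivAt_iff_tendsto_slope.mp hderiv).congr fun t => ?_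
  simp [slope_def_field]

theorem rpow_neg_le_add_of_sub_le {a b C α : ℝ} (ha : 0 < a) (hC : 0 < C) (hα : 1 ≤ α)
    (ht : C * a ^ (α - 1) < 1) (h : a - b ≤ C * a ^ α) :
    b ^ (-(α - 1)) ≤ a ^ (-(α - 1)) +
      C * (((1 - C * a ^ (α - 1)) ^ (-(α - 1)) - 1) / (C * a ^ (α - 1))) := by
  set t := C * a ^ (α - 1) with ht_def
  have htpos : 0 < t := by positivity
  have hCa : C * a ^ α = t * a := by
    rw [ht_def, mul_assoc, ← Real.rpow_add_one ha.ne', sub_add_cancel]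
  have hlow : a * (1 - t) ≤ b := by linarith
  have hat : a ^ (-(α - 1)) * t = C := by
    rw [ht_def, mul_left_comm, ← Real.rpow_add ha, neg_add_cancel, Real.rpow_zero, mul_one]
  calc b ^ (-(α - 1)) ≤ (a * (1 - t)) ^ (-(α - 1)) :=
        Real.rpow_le_rpow_of_nonpos (mul_pos ha (by linarith)) hlow (by linarith)
    _ = a ^ (-(α - 1)) * (1 - t) ^ (-(α - 1)) := Real.mul_rpow ha.le (by linarith)
    _ = a ^ (-(α - 1)) + C * (((1 - t) ^ (-(α - 1)) - 1) / t) := by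
        rw [← hat]; field_simp; ring

theorem eventually_rpow_neg_succ_le_add {u : ℕ → ℝ} {α C K : ℝ} (hpos : ∀ n, 0 < u n)
    (hlim : Tendsto u atTop (𝓝 0)) (hα : 1 < α) (hC : 0 < C) (hK : C * (α - 1) < K)
    (hrec : ∀ᶠ n in atTop, u n - u (n + 1) ≤ C * u n ^ α) :
    ∀ᶠ n in atTop, u (n + 1) ^ (-(α - 1)) ≤ u n ^ (-(α - 1)) + K := by
  set t : ℕ → ℝ := fun n => C * u n ^ (α - 1)
  have ht : Tendsto t atTop (𝓝[≠] 0) := by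
    refine tendsto_nhdsWithin_of_tendsto_nhds_of_eventually_within _ ?_
      (Eventually.of_forall fun n => (by have := hpos n; positivity : 0 < t n).ne')
    have hrpow := (Real.continuousAt_rpow_const 0 (α - 1) (Or.inr (by linarith))).tendsto
    simpa [Real.zero_rpow (by linarith : α - 1 ≠ 0)] using (hrpow.comp hlim).const_mul C
  have hincr : Tendsto (fun n => C * (((1 - t n) ^ (-(α - 1)) - 1) / t n)) atTop
      (𝓝 (C * (α - 1))) := by
    simpa using ((tendsto_one_sub_rpow_sub_one_div (-(α - 1))).comp ht).const_mul C
  filter_upwards [hincr.eventually_lt_const hK,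
    (ht.mono_right nhdsWithin_le_nhds).eventually_lt_const one_pos, hrec] with n hn ht1 hn'
  exact (rpow_neg_le_add_of_sub_le (hpos n) hC hα.le ht1 hn').trans (by linarith)

theorem exists_eventually_le_add_mul_of_eventually_succ_le {v : ℕ → ℝ} {K : ℝ}
    (h : ∀ᶠ n in atTop, v (n + 1) ≤ v n + K) : ∃ A, ∀ᶠ n in atTop, v n ≤ A + n * K := by
  obtain ⟨N, hN⟩ := eventually_atTop.mp h
  refine ⟨v N - N * K, eventually_atTop.mpr ⟨N, fun n hn => ?_⟩⟩
  induction n, hn using Nat.le_induction with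
  | base => simp
  | succ n hn ih => push_cast; linarith [hN n hn]

theorem eventually_lt_rpow_mul_of_rpow_neg_le {u : ℕ → ℝ} {γ A K r : ℝ} (hpos : ∀ n, 0 < u n)
    (hγ : 0 < γ) (hK : 0 < K) (hr : r < K ^ (-(1 / γ)))
    (hv : ∀ᶠ n in atTop, u n ^ (-γ) ≤ A + n * K) :
    ∀ᶠ n : ℕ in atTop, r < (n : ℝ) ^ (1 / γ) * u n := by
  have hquot : Tendsto (fun n : ℕ => (n : ℝ) / (A + n * K)) atTop (𝓝 K⁻¹) := by
    have := (tendsto_natCast_div_add_atTop (A / K)).const_mul K⁻¹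
    rw [mul_one] at this
    refine this.congr fun n => ?_
    field_simp
    ring
  have hlim : Tendsto (fun n : ℕ => ((n : ℝ) / (A + n * K)) ^ (1 / γ)) atTop
      (𝓝 (K ^ (-(1 / γ)))) := by
    rw [Real.rpow_neg hK.le, ← Real.inv_rpow hK.le]
    exact (Real.continuousAt_rpow_const _ _ (Or.inl (inv_pos.mpr hK).ne')).tendsto.comp hquot
  filter_upwards [hlim.eventually_const_lt hr, hv] with n hr' hn
  have hw : 0 < u n ^ (-γ) := Real.rpow_pos_of_pos (hpos n) _
  have hu : u n = (u n ^ (-γ)) ^ (-(1 / γ)) := by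
    rw [← Real.rpow_mul (hpos n).le, neg_mul_neg, mul_one_div_cancel hγ.ne', Real.rpow_one]
  calc r < ((n : ℝ) / (A + n * K)) ^ (1 / γ) := hr'
    _ = (n : ℝ) ^ (1 / γ) * (A + n * K) ^ (-(1 / γ)) := by
        rw [Real.div_rpow n.cast_nonneg (hw.trans_le hn).le, Real.rpow_neg (hw.trans_le hn).le,
          div_eq_mul_inv]
    _ ≤ (n : ℝ) ^ (1 / γ) * u n := by
        rw [hu]
        exact mul_le_mul_of_nonneg_left
          (Real.rpow_le_rpow_of_nonpos hw hn (neg_nonpos.mpr (by positivity))) (by positivity)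

theorem stmt_0_general (u : ℕ → ℝ) (hpos : ∀ n, 0 < u n)
    (hlim : Tendsto u atTop (nhds 0))
    (α C : ℝ) (hα : 1 < α) (hC : 0 < C)
    (hrec : ∀ᶠ n in atTop, u n - u (n + 1) ≤ C * u n ^ α) :
    (((C * (α - 1)) ^ (-(1 / (α - 1))) : ℝ) : EReal) ≤
      liminf (fun n : ℕ => (((n : ℝ) ^ (1 / (α - 1)) * u n : ℝ) : EReal)) atTop := by
  have hγ : 0 < α - 1 := by linarith
  rw [le_liminf_iff]
  intro b hb
  obtain ⟨r, hbr, hr⟩ := EReal.lt_iff_exists_real_btwn.mp hb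
  rw [EReal.coe_lt_coe_iff] at hr
  obtain ⟨K, hKr, hK⟩ : ∃ K, r < K ^ (-(1 / (α - 1))) ∧ C * (α - 1) < K := by
    have hcont := Real.continuousAt_rpow_const (C * (α - 1)) (-(1 / (α - 1)))
      (Or.inl (mul_pos hC hγ).ne')
    exact (((hcont.eventually_const_lt hr).filter_mono nhdsWithin_le_nhds).and
      (self_mem_nhdsWithin (s := Set.Ioi _))).exists
  obtain ⟨A, hA⟩ := exists_eventually_le_add_mul_of_eventually_succ_le (v := fun n => u n ^ (-(α - 1)))
    (eventually_rpow_neg_succ_le_add hpos hlim hα hC hK hrec)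
  filter_upwards [eventually_lt_rpow_mul_of_rpow_neg_le hpos hγ ((mul_pos hC hγ).trans hK) hKr hA]
    with n hn
  exact hbr.trans (EReal.coe_lt_coe_iff.mpr hn)

theorem stmt_0 (u : ℕ → ℝ) (hpos : ∀ n, 0 < u n)
    (hmono : ∀ n, u (n + 1) ≤ u n)
    (hlim : Tendsto u atTop (nhds 0))
    (α C : ℝ) (hα : 1 < α) (hC : 0 < C)
    (hrec : ∀ᶠ n in atTop, u n - u (n + 1) ≤ C * u n ^ α) :
    (((C * (α - 1)) ^ (-(1 / (α - 1))) : ℝ) : EReal) ≤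
      liminf (fun n : ℕ => (((n : ℝ) ^ (1 / (α - 1)) * u n : ℝ) : EReal)) atTop :=
  stmt_0_general u hpos hlim α C hα hC hrec
end

section
/- Let (u_n) be a non-increasing sequence of positive real numbers converging to 0. Let α > 1 and C > 0, and suppose that for all sufficiently large n one has u_n − u_{n+1} ≥ C·u_n^α. Then limsup_{n→∞} n^{1/(α−1)}·u_n ≤ (C(α−1))^{−1/(α−1)}. -/
/-!
Put `β = α - 1` and `v n = u n ^ (-β)`. Bernoulli's inequality for the negative exponent `-β`
(the tangent-line bound for the convex function `t ↦ t ^ (-β)`) turns the decrement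
`u n - u (n + 1) ≥ C u n ^ α` into the increment `v (n + 1) ≥ v n + C β`. Hence
`v n ≥ C β n + O(1)`, that is,
`n ^ (1 / β) u n ≤ (n / (C β n + O(1))) ^ (1 / β) → (C β) ^ (-1 / β)`.
-/

open Filter Real Topology

theorem one_add_mul_self_le_rpow_one_add_of_nonpos {s : ℝ} (hs : -1 < s) {p : ℝ}
    (hp : p ≤ 0) : 1 + p * s ≤ (1 + s) ^ p := by
  have ht : 0 < 1 + s := by linarith
  have hq : 0 < 1 - p := by linarith
  -- weighted AM-GM of `(1 + s) ^ p` and `1 + s` with weights `1 : -p`; their geometric mean is `1`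
  have hamgm := geom_mean_le_arith_mean2_weighted (inv_nonneg.2 hq.le)
    (div_nonneg (neg_nonneg.2 hp) hq.le) (rpow_nonneg ht.le p) ht.le (by field_simp; ring)
  have hgeom : ((1 + s) ^ p) ^ (1 - p)⁻¹ * (1 + s) ^ (-p / (1 - p)) = 1 := by
    rw [← rpow_mul ht.le, ← rpow_add ht]
    simp [div_eq_mul_inv]
  rw [hgeom, ← sub_nonneg] at hamgm
  have hgap : (1 - p)⁻¹ * (1 + s) ^ p + -p / (1 - p) * (1 + s) - 1
      = ((1 + s) ^ p - (1 + p * s)) / (1 - p) := by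
    field_simp; ring
  rw [hgap] at hamgm
  linarith [(le_div_iff₀ hq).1 hamgm]

theorem rpow_neg_add_le_of_mul_rpow_le_sub {a b α C : ℝ} (ha : 0 < a) (hb : 0 < b)
    (hα : 1 ≤ α) (h : C * a ^ α ≤ a - b) :
    a ^ (-(α - 1)) + C * (α - 1) ≤ b ^ (-(α - 1)) := by
  set β := α - 1
  have hβ : 0 ≤ β := by linarith
  have hbern := one_add_mul_self_le_rpow_one_add_of_nonpos
    (show -1 < b / a - 1 by linarith [div_pos hb ha]) (neg_nonpos.2 hβ)
  rw [add_sub_cancel, div_rpow hb.le ha.le, le_div_iff₀ (rpow_pos_of_pos ha _)] at hbern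
  have hdrop : C * a ^ β ≤ 1 - b / a := by
    rw [show α = 1 + β by ring, rpow_one_add' ha.le (by linarith)] at h
    rw [one_sub_div ha.ne', le_div_iff₀ ha]
    linarith
  have hinv : a ^ (-β) * a ^ β = 1 := by rw [← rpow_add ha]; simp
  calc a ^ (-β) + C * β = a ^ (-β) * (1 + β * (C * a ^ β)) := by
        linear_combination -C * β * hinv
    _ ≤ a ^ (-β) * (1 + β * (1 - b / a)) := by gcongr
    _ ≤ b ^ (-β) := by linarith

theorem exists_add_mul_le_of_eventually_add_le_succ {v : ℕ → ℝ} {K : ℝ}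
    (h : ∀ᶠ n in atTop, v n + K ≤ v (n + 1)) :
    ∃ c, ∀ᶠ n in atTop, c + n * K ≤ v n := by
  obtain ⟨N, hN⟩ := eventually_atTop.1 h
  refine ⟨v N - N * K, eventually_atTop.2 ⟨N, fun n hn => ?_⟩⟩
  induction n, hn using Nat.le_induction with
  | base => simp
  | succ n hn ih =>
    push_cast
    linarith [hN n hn]

theorem tendsto_natCast_div_add_mul_atTop {K : ℝ} (hK : K ≠ 0) (c : ℝ) :
    Tendsto (fun n : ℕ => (n : ℝ) / (c + n * K)) atTop (𝓝 K⁻¹) := by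
  have h : Tendsto (fun n : ℕ => (c / n + K)⁻¹) atTop (𝓝 K⁻¹) := by
    simpa using ((tendsto_const_div_atTop_nhds_zero_nat c).add_const K).inv₀ (by rwa [zero_add])
  refine h.congr' (eventually_ne_atTop 0 |>.mono fun n hn => ?_)
  have : (n : ℝ) ≠ 0 := Nat.cast_ne_zero.2 hn
  field_simp

theorem rpow_mul_le_div_rpow_of_le_rpow_neg {x y t β : ℝ} (hx : 0 < x) (hy : 0 < y)
    (ht : 0 ≤ t) (hβ : 0 < β) (h : y ≤ x ^ (-β)) : t ^ (1 / β) * x ≤ (t / y) ^ (1 / β) :=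
  calc t ^ (1 / β) * x = t ^ (1 / β) * (x ^ (-β)) ^ (-(1 / β)) := by
        rw [← rpow_mul hx.le, neg_mul_neg, mul_one_div_cancel hβ.ne', rpow_one]
    _ ≤ t ^ (1 / β) * y ^ (-(1 / β)) := by
        gcongr t ^ (1 / β) * ?_
        exact rpow_le_rpow_of_nonpos hy h (neg_nonpos.2 (by positivity))
    _ = (t / y) ^ (1 / β) := by rw [div_rpow ht hy.le, rpow_neg hy.le, ← div_eq_mul_inv]

theorem stmt_1_general (u : ℕ → ℝ) (hpos : ∀ n, 0 < u n)
    (α C : ℝ) (hα : 1 < α) (hC : 0 < C)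
    (hrec : ∀ᶠ n in atTop, C * u n ^ α ≤ u n - u (n + 1)) :
    limsup (fun n : ℕ => (((n : ℝ) ^ (1 / (α - 1)) * u n : ℝ) : EReal)) atTop ≤
      (((C * (α - 1)) ^ (-(1 / (α - 1))) : ℝ) : EReal) := by
  have hβ : 0 < α - 1 := sub_pos.2 hα
  set K := C * (α - 1)
  have hK : 0 < K := mul_pos hC hβ
  have hstep : ∀ᶠ n in atTop, u n ^ (-(α - 1)) + K ≤ u (n + 1) ^ (-(α - 1)) :=
    hrec.mono fun n hn => rpow_neg_add_le_of_mul_rpow_le_sub (hpos n) (hpos (n + 1)) hα.le hn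
  obtain ⟨c, hc⟩ := exists_add_mul_le_of_eventually_add_le_succ hstep
  have hlin : Tendsto (fun n : ℕ => c + n * K) atTop atTop :=
    tendsto_atTop_add_const_left _ c (tendsto_natCast_atTop_atTop.atTop_mul_const hK)
  have hbound : ∀ᶠ n : ℕ in atTop,
      (n : ℝ) ^ (1 / (α - 1)) * u n ≤ ((n : ℝ) / (c + n * K)) ^ (1 / (α - 1)) := by
    filter_upwards [hc, hlin.eventually_gt_atTop 0] with n hcn hlin_pos
    exact rpow_mul_le_div_rpow_of_le_rpow_neg (hpos n) hlin_pos n.cast_nonneg hβ hcn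
  have hlim : Tendsto (fun n : ℕ => ((n : ℝ) / (c + n * K)) ^ (1 / (α - 1))) atTop
      (𝓝 (K ^ (-(1 / (α - 1))))) := by
    rw [rpow_neg hK.le, ← inv_rpow hK.le]
    exact (tendsto_natCast_div_add_mul_atTop hK.ne' c).rpow_const (Or.inr (by positivity))
  calc limsup (fun n : ℕ => (((n : ℝ) ^ (1 / (α - 1)) * u n : ℝ) : EReal)) atTop
      ≤ limsup (fun n : ℕ => ((((n : ℝ) / (c + n * K)) ^ (1 / (α - 1)) : ℝ) : EReal))
          atTop :=
        limsup_le_limsup (hbound.mono fun n hn => EReal.coe_le_coe_iff.2 hn)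
    _ = ((K ^ (-(1 / (α - 1))) : ℝ) : EReal) :=
        ((continuous_coe_real_ereal.tendsto _).comp hlim).limsup_eq

theorem stmt_1 (u : ℕ → ℝ) (hpos : ∀ n, 0 < u n)
    (hmono : ∀ n, u (n + 1) ≤ u n)
    (hlim : Tendsto u atTop (nhds 0))
    (α C : ℝ) (hα : 1 < α) (hC : 0 < C)
    (hrec : ∀ᶠ n in atTop, C * u n ^ α ≤ u n - u (n + 1)) :
    limsup (fun n : ℕ => (((n : ℝ) ^ (1 / (α - 1)) * u n : ℝ) : EReal)) atTop ≤
      (((C * (α - 1)) ^ (-(1 / (α - 1))) : ℝ) : EReal) :=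
  stmt_1_general u hpos α C hα hC hrec
end

section
/- Let (u_n) be a non-increasing sequence of positive real numbers converging to 0 and let C > 0. If for all sufficiently large n one has u_n − u_{n+1} ≤ C·u_n²·log(1/u_n), then liminf_{n→∞} u_n·n·log n ≥ 1/C. -/
open Filter Real

private lemma log_le_two_sqrt' {x : ℝ} (hx : 1 ≤ x) : Real.log x ≤ 2 * Real.sqrt x - 2 := by
  have h0 : (0:ℝ) ≤ x := by linarith
  have h1 : Real.log (Real.sqrt x) ≤ Real.sqrt x - 1 :=
    Real.log_le_sub_one_of_pos (Real.sqrt_pos.mpr (by linarith))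
  have h2 : Real.log x = 2 * Real.log (Real.sqrt x) := by
    rw [Real.log_sqrt h0]; ring
  linarith

private lemma log_le_half' {x : ℝ} (hx : 1 ≤ x) : Real.log x ≤ x / 2 := by
  have h0 : (0:ℝ) ≤ x := by linarith
  have h1 := log_le_two_sqrt' hx
  have h2 : Real.sqrt x * Real.sqrt x = x := Real.mul_self_sqrt h0
  nlinarith [sq_nonneg (Real.sqrt x - 2)]

private lemma tendsto_uL (u : ℕ → ℝ) (hpos : ∀ n, 0 < u n)
    (hlim : Tendsto u atTop (nhds 0)) :
    Tendsto (fun n => u n * Real.log (1 / u n)) atTop (nhds 0) := by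
  have h : Tendsto (fun x : ℝ => Real.log x * x) (nhdsWithin 0 (Set.Ioi 0)) (nhds 0) := by
    simpa only [rpow_one] using tendsto_log_mul_rpow_nhdsGT_zero zero_lt_one
  have hu : Tendsto u atTop (nhdsWithin 0 (Set.Ioi 0)) :=
    tendsto_nhdsWithin_of_tendsto_nhds_of_eventually_within u hlim
      (Eventually.of_forall fun n => hpos n)
  have h2 := (h.comp hu).neg
  simp only [neg_zero] at h2
  refine h2.congr fun n => ?_
  simp only [Function.comp_apply, one_div, Real.log_inv]
  ring

private lemma evL1 (u : ℕ → ℝ) (hpos : ∀ n, 0 < u n)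
    (hlim : Tendsto u atTop (nhds 0)) :
    ∀ᶠ n in atTop, 1 < Real.log (1 / u n) := by
  have hev : ∀ᶠ n in atTop, u n < Real.exp (-1) :=
    hlim.eventually_lt_const (Real.exp_pos (-1))
  filter_upwards [hev] with n h
  have hu := hpos n
  rw [Real.lt_log_iff_exp_lt (by positivity)]
  have h2 := one_div_lt_one_div_of_lt hu h
  rwa [one_div (Real.exp (-1)), ← Real.exp_neg, neg_neg] at h2

private lemma lemA (u : ℕ → ℝ) (hpos : ∀ n, 0 < u n)
    (hmono : ∀ n, u (n + 1) ≤ u n)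
    (hlim : Tendsto u atTop (nhds 0))
    (C : ℝ) (hC : 0 < C)
    (hrec : ∀ᶠ n in atTop, u n - u (n + 1) ≤ C * u n ^ 2 * Real.log (1 / u n))
    (K : ℝ) (hK : C < K) :
    ∀ᶠ n in atTop, 1 / (K * n) ≤ u n * Real.log (1 / u n) := by
  set L : ℕ → ℝ := fun n => Real.log (1 / u n) with hLdef
  set K₂ : ℝ := (C + K) / 2 with hK₂def
  have hK₂1 : C < K₂ := by rw [hK₂def]; linarith
  have hK₂2 : K₂ < K := by rw [hK₂def]; linarith
  have hK₂pos : 0 < K₂ := lt_trans hC hK₂1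
  have hUL := tendsto_uL u hpos hlim
  have hsmall : ∀ᶠ n in atTop, C * (u n * L n) ≤ 1 - C / K₂ := by
    have hp : (0:ℝ) < 1 - C / K₂ := by
      rw [sub_pos, div_lt_one hK₂pos]; exact hK₂1
    have h2 : Tendsto (fun n => C * (u n * L n)) atTop (nhds (C * 0)) := hUL.const_mul C
    rw [mul_zero] at h2
    exact (h2.eventually_lt_const hp).mono fun n h => le_of_lt h
  obtain ⟨N, hN⟩ := eventually_atTop.mp ((hrec.and hsmall).and (evL1 u hpos hlim))
  have hLmono : ∀ n, L n ≤ L (n + 1) := by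
    intro n
    have h1 : (0:ℝ) < 1 / u n := one_div_pos.mpr (hpos n)
    exact Real.log_le_log h1 (by
      apply one_div_le_one_div_of_le (hpos (n+1)) (hmono n))
  -- key step inequality
  set a : ℕ → ℝ := fun n => 1 / (u n * L n) with hadef
  have hLpos : ∀ n ≥ N, 1 < L n := fun n hn => (hN n hn).2
  have hapos : ∀ n ≥ N, 0 < a n := by
    intro n hn
    have := hLpos n hn
    have := hpos n
    rw [hadef]
    positivity
  have step : ∀ n ≥ N, a (n + 1) ≤ a n + K₂ := by
    intro n hn
    obtain ⟨⟨hr, hs⟩, hL1⟩ := hN n hn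
    have hL1' : 1 < L (n+1) := (hN (n+1) (by omega)).2
    have hp := hpos n
    have hq := hpos (n+1)
    have hpq := hmono n
    have hLm := hLmono n
    have hL0 : 0 < L n := by linarith
    have h2 : u n - u (n+1) ≤ C * u n ^ 2 * L n := hr
    have hs'' : K₂ * (C * (u n * L n)) ≤ K₂ - C := by
      have h5 := mul_le_mul_of_nonneg_left hs hK₂pos.le
      have h6 : K₂ * (1 - C / K₂) = K₂ - C := by field_simp
      linarith
    have hq2' : C * u n ≤ K₂ * u (n+1) := by
      nlinarith [mul_le_mul_of_nonneg_right hs'' hp.le,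
        mul_le_mul_of_nonneg_left h2 hK₂pos.le]
    have key : u n - u (n+1) ≤ K₂ * (u n * u (n+1) * L n) := by
      nlinarith [mul_le_mul_of_nonneg_right hq2' (mul_nonneg hp.le hL0.le)]
    have h3 : a (n+1) ≤ 1 / (u (n+1) * L n) := by
      apply one_div_le_one_div_of_le (by positivity)
      exact mul_le_mul_of_nonneg_left hLm (le_of_lt hq)
    have h4 : 1 / (u (n+1) * L n) - 1 / (u n * L n) = (u n - u (n+1)) / (u n * u (n+1) * L n) := by
      field_simp
    have h5 : (u n - u (n+1)) / (u n * u (n+1) * L n) ≤ K₂ := by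
      rw [div_le_iff₀ (by positivity)]
      linarith [key]
    have : 1 / (u (n+1) * L n) ≤ a n + K₂ := by
      rw [hadef]; dsimp only; linarith [h4, h5]
    linarith
  have ind : ∀ m : ℕ, a (N + m) ≤ a N + K₂ * m := by
    intro m
    induction m with
    | zero => simp
    | succ k ih =>
      have h1 := step (N + k) (by omega)
      have : (N + (k+1)) = (N + k) + 1 := by omega
      rw [this]
      push_cast
      push_cast at ih
      linarith
  obtain ⟨M, hM⟩ := exists_nat_ge (a N / (K - K₂))
  have haNM : a N ≤ (K - K₂) * M := by
    rw [div_le_iff₀ (by linarith)] at hM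
    linarith
  filter_upwards [eventually_ge_atTop N, eventually_ge_atTop M, eventually_ge_atTop 1]
    with n hnN hnM hn1
  have han : a n ≤ a N + K₂ * (n - N : ℕ) := by
    have := ind (n - N)
    rwa [show N + (n - N) = n from by omega] at this
  have hcast : ((n - N : ℕ) : ℝ) ≤ (n : ℝ) := by
    exact_mod_cast Nat.cast_le.mpr (Nat.sub_le n N)
  have hMn : (M : ℝ) ≤ (n : ℝ) := by exact_mod_cast hnM
  have haK : a n ≤ K * n := by
    have h1 : a n ≤ a N + K₂ * n := by nlinarith
    nlinarith
  have hap := hapos n hnN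
  have h2 : 1 / (K * n) ≤ 1 / a n := one_div_le_one_div_of_le hap haK
  rwa [hadef, one_div_one_div] at h2

private lemma lemB (u : ℕ → ℝ) (hpos : ∀ n, 0 < u n)
    (hmono : ∀ n, u (n + 1) ≤ u n)
    (hlim : Tendsto u atTop (nhds 0))
    (C : ℝ) (hC : 0 < C)
    (hrec : ∀ᶠ n in atTop, u n - u (n + 1) ≤ C * u n ^ 2 * Real.log (1 / u n))
    (ε : ℝ) (hε : 0 < ε) :
    ∀ᶠ n in atTop, Real.log (1 / u n) ≤ (1 + ε) * Real.log n := by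
  have hA := lemA u hpos hmono hlim C hC hrec (C + 1) (by linarith)
  set A := Real.log (C + 1) with hAdef
  have hApos : 0 < A := Real.log_pos (by linarith)
  set x₀ : ℝ := max (max (16 / ε ^ 2) (2 * (A + Real.log 4) / ε)) (max A 1) with hx₀def
  have hlogn : Tendsto (fun n : ℕ => Real.log n) atTop atTop :=
    Real.tendsto_log_atTop.comp tendsto_natCast_atTop_atTop
  filter_upwards [hA, evL1 u hpos hlim, hlogn.eventually_ge_atTop x₀, eventually_ge_atTop 1]
    with n h1 h2 h3 h4
  set L := Real.log (1 / u n) with hLdef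
  set x := Real.log n with hxdef
  have hn1 : (1:ℝ) ≤ (n:ℝ) := by exact_mod_cast h4
  have hx1 : 1 ≤ x := le_trans (le_trans (le_max_right _ _) (le_max_right _ _)) h3
  have hxA : A ≤ x := le_trans (le_trans (le_max_left _ _) (le_max_right _ _)) h3
  have hx16 : 16 / ε ^ 2 ≤ x := le_trans (le_trans (le_max_left _ _) (le_max_left _ _)) h3
  have hxB : 2 * (A + Real.log 4) / ε ≤ x :=
    le_trans (le_trans (le_max_right _ _) (le_max_left _ _)) h3
  have hup := hpos n
  have hL0 : 0 < L := by linarith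
  -- 1/u n ≤ (C+1) * n * L
  have hinv : 1 / u n ≤ (C + 1) * n * L := by
    have hden : (0:ℝ) < (C + 1) * n := by positivity
    rw [div_le_iff₀ hup]
    rw [div_le_iff₀ hden] at h1
    nlinarith
  have hLlog : L ≤ A + x + Real.log L := by
    have hs : Real.log (1 / u n) ≤ Real.log ((C + 1) * (n:ℝ) * L) :=
      Real.log_le_log (by positivity) hinv
    rw [Real.log_mul (by positivity) (by positivity),
        Real.log_mul (by positivity) (by positivity)] at hs
    rw [hLdef]
    linarith [hs]
  have hL2 : L ≤ 2 * A + 2 * x := by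
    have := log_le_half' (le_of_lt h2)
    linarith
  have hlogL : Real.log L ≤ Real.log (2 * A + 2 * x) := Real.log_le_log hL0 hL2
  have h4x : Real.log (2 * A + 2 * x) ≤ Real.log 4 + Real.log x := by
    have hle : 2 * A + 2 * x ≤ 4 * x := by linarith
    have := Real.log_le_log (by linarith) hle
    rwa [Real.log_mul (by norm_num) (by linarith)] at this
  have hsq : Real.log x ≤ 2 * Real.sqrt x - 2 := log_le_two_sqrt' hx1
  have hsqx : 4 / ε ≤ Real.sqrt x := by
    apply Real.le_sqrt_of_sq_le
    have heq : (4 / ε) ^ 2 = 16 / ε ^ 2 := by rw [div_pow]; norm_num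
    rw [heq]; exact hx16
  have hxx : Real.sqrt x * Real.sqrt x = x := Real.mul_self_sqrt (by linarith)
  have hb1 : 2 * Real.sqrt x ≤ ε / 2 * x := by
    have h5 : ε / 2 * (4 / ε) ≤ ε / 2 * Real.sqrt x :=
      mul_le_mul_of_nonneg_left hsqx (by positivity)
    have h6 : ε / 2 * (4 / ε) = 2 := by field_simp; ring
    have h7 : 2 ≤ ε / 2 * Real.sqrt x := by linarith
    nlinarith [Real.sqrt_nonneg x]
  have hb2 : A + Real.log 4 ≤ ε / 2 * x := by
    rw [div_le_iff₀ hε] at hxB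
    linarith
  nlinarith

theorem stmt_2 (u : ℕ → ℝ) (hpos : ∀ n, 0 < u n)
    (hmono : ∀ n, u (n + 1) ≤ u n)
    (hlim : Tendsto u atTop (nhds 0))
    (C : ℝ) (hC : 0 < C)
    (hrec : ∀ᶠ n in atTop, u n - u (n + 1) ≤ C * u n ^ 2 * Real.log (1 / u n)) :
    ((1 / C : ℝ) : EReal) ≤
      liminf (fun n : ℕ => ((u n * n * Real.log n : ℝ) : EReal)) atTop := by
  have main : ∀ K : ℝ, C < K → ∀ᶠ n in atTop, 1 / K ≤ u n * n * Real.log n := by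
    intro K hK
    set K₁ : ℝ := (C + K) / 2 with hK₁def
    have hK₁1 : C < K₁ := by rw [hK₁def]; linarith
    have hK₁2 : K₁ < K := by rw [hK₁def]; linarith
    have hK₁pos : 0 < K₁ := lt_trans hC hK₁1
    have hKpos : 0 < K := lt_trans hK₁pos hK₁2
    have hε : 0 < K / K₁ - 1 := by
      rw [sub_pos, lt_div_iff₀ hK₁pos]; linarith
    have hA := lemA u hpos hmono hlim C hC hrec K₁ hK₁1
    have hB := lemB u hpos hmono hlim C hC hrec (K / K₁ - 1) hε
    filter_upwards [hA, hB, evL1 u hpos hlim, eventually_ge_atTop 3] with n h1 h2 h3 h4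
    have hn3 : (3:ℝ) ≤ (n:ℝ) := by exact_mod_cast h4
    have hx0 : 0 < Real.log n := Real.log_pos (by linarith)
    set L := Real.log (1 / u n)
    set x := Real.log n
    have hup := hpos n
    have hL0 : 0 < L := by linarith
    have h2' : L ≤ (K / K₁) * x := by
      have : (1 + (K / K₁ - 1)) = K / K₁ := by ring
      rwa [this] at h2
    have hKL : K₁ * L ≤ K * x := by
      have := mul_le_mul_of_nonneg_left h2' (le_of_lt hK₁pos)
      calc K₁ * L ≤ K₁ * (K / K₁ * x) := this
        _ = K * x := by field_simp
    rw [div_le_iff₀ (by positivity : (0:ℝ) < K₁ * n)] at h1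
    rw [div_le_iff₀ hKpos]
    -- 1 ≤ u n * L * (K₁ * n) ≤ u n * n * (K * x)
    have hnn : (0:ℝ) < (n:ℝ) := by linarith
    nlinarith [mul_le_mul_of_nonneg_left hKL (le_of_lt (mul_pos hup hnn))]
  rw [le_liminf_iff]
  intro b hb
  obtain ⟨c, hbc, hcC⟩ := EReal.exists_between_coe_real hb
  have hc : c < 1 / C := by exact_mod_cast hcC
  have hev : ∀ᶠ n in atTop, c ≤ u n * n * Real.log n := by
    by_cases hc0 : 0 < c
    · have hCc : C < 1 / c := by
        rw [lt_div_iff₀ hc0]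
        rw [lt_div_iff₀ hC] at hc
        linarith
      set K : ℝ := (C + 1 / c) / 2 with hKdef
      have h1 : C < K := by rw [hKdef]; linarith
      have h2 : K < 1 / c := by rw [hKdef]; linarith
      have hKpos : 0 < K := lt_trans hC h1
      have hcK : c ≤ 1 / K := by
        rw [le_div_iff₀ hKpos]
        rw [lt_div_iff₀ hc0] at h2
        linarith
      exact (main K h1).mono fun n h => le_trans hcK h
    · push_neg at hc0
      filter_upwards [eventually_ge_atTop 3] with n hn
      have hn3 : (3:ℝ) ≤ (n:ℝ) := by exact_mod_cast hn
      have hx0 : 0 < Real.log n := Real.log_pos (by linarith)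
      have hu0 := hpos n
      have := mul_pos (mul_pos hu0 (show (0:ℝ) < (n:ℝ) by linarith)) hx0
      linarith
  filter_upwards [hev] with n h
  exact lt_of_lt_of_le hbc (by exact_mod_cast h)
end

section
/- Let (u_n) be a non-increasing sequence of positive real numbers converging to 0 and let C > 0. If for all sufficiently large n one has u_n − u_{n+1} ≥ C·u_n²·log(1/u_n), then limsup_{n→∞} u_n·n·log n ≤ 1/C. -/
/-!
Pass to `w n = 1 / u n`. The hypothesis becomes `w (n + 1) ≥ w n + C log (w n)`, so `w` grows at
least linearly, hence `log (w n) ≥ log n` eventually and `w (n + 1) ≥ w n + C log n`. Comparing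
with `C (n log n - 2n)`, whose increments are at most `C log n`, gives `w n ≥ C n (log n - 3)`
eventually, i.e. `u n n log n ≤ log n / (C (log n - 3)) → 1 / C`.
-/

open Filter Real

theorem inv_add_mul_log_inv_le_inv {x y C : ℝ} (hx : 0 < x) (hy : 0 < y) (hx1 : x ≤ 1)
    (hC : 0 ≤ C) (h : C * x ^ 2 * log (1 / x) ≤ x - y) :
    x⁻¹ + C * log x⁻¹ ≤ y⁻¹ := by
  rw [one_div] at h
  have hL : 0 ≤ C * log x⁻¹ :=
    mul_nonneg hC (log_nonneg (one_le_inv_iff₀.2 ⟨hx, hx1⟩))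
  have hyx : y ≤ x := by nlinarith [mul_nonneg hL (sq_nonneg x)]
  have key : C * log x⁻¹ ≤ (x - y) / (x * y) := by
    rw [le_div_iff₀ (by positivity)]
    nlinarith [mul_le_mul_of_nonneg_left hyx (mul_nonneg hL hx.le)]
  linarith [show y⁻¹ - x⁻¹ = (x - y) / (x * y) by field_simp]

theorem exists_eventually_add_le_of_sub_le_sub {α : Type*} [AddCommGroup α] [PartialOrder α]
    [IsOrderedAddMonoid α] {f w : ℕ → α}
    (h : ∀ᶠ n in atTop, f (n + 1) - f n ≤ w (n + 1) - w n) :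
    ∃ K, ∀ᶠ n in atTop, f n + K ≤ w n := by
  obtain ⟨N, hN⟩ := eventually_atTop.1 h
  refine ⟨w N - f N, eventually_atTop.2 ⟨N, fun n hn => ?_⟩⟩
  induction n, hn using Nat.le_induction with
  | base => simp
  | succ n hn ih =>
    calc f (n + 1) + (w N - f N) = (f (n + 1) - f n) + (f n + (w N - f N)) := by abel
      _ ≤ (w (n + 1) - w n) + w n := add_le_add (hN n hn) ih
      _ = w (n + 1) := sub_add_cancel _ _

theorem add_one_mul_log_add_one_le {x : ℝ} (hx : 1 ≤ x) :
    (x + 1) * log (x + 1) ≤ (x + 1) * log x + 2 := by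
  have hx0 : 0 < x := by linarith
  have hlog : log (x + 1) - log x ≤ 1 / x := by
    rw [← log_div (by positivity) hx0.ne']
    calc log ((x + 1) / x) ≤ (x + 1) / x - 1 := log_le_sub_one_of_pos (by positivity)
      _ = 1 / x := by field_simp; ring
  have h2 : (x + 1) * (1 / x) ≤ 2 := by
    rw [mul_one_div, div_le_iff₀ hx0]; linarith
  nlinarith [mul_le_mul_of_nonneg_left hlog (by linarith : 0 ≤ x + 1)]

theorem eventually_natCast_le_of_add_mul_log_le_succ {w : ℕ → ℝ} {C : ℝ} (hC : 0 < C)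
    (hw : Tendsto w atTop atTop) (h : ∀ᶠ n in atTop, w n + C * log (w n) ≤ w (n + 1)) :
    ∀ᶠ n : ℕ in atTop, (n : ℝ) ≤ w n := by
  have hlog : ∀ᶠ n in atTop, 2 ≤ C * log (w n) :=
    ((tendsto_log_atTop.comp hw).const_mul_atTop hC).eventually_ge_atTop 2
  obtain ⟨K, hK⟩ := exists_eventually_add_le_of_sub_le_sub (f := fun n : ℕ => 2 * (n : ℝ))
    (by filter_upwards [h, hlog] with n hn hn2; push_cast; linarith)
  filter_upwards [hK, tendsto_natCast_atTop_atTop.eventually_ge_atTop (-K)] with n hn hnK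
  linarith

theorem eventually_mul_log_sub_le_of_add_mul_log_le_succ {w : ℕ → ℝ} {C : ℝ} (hC : 0 < C)
    (h : ∀ᶠ n : ℕ in atTop, w n + C * log n ≤ w (n + 1)) :
    ∀ᶠ n : ℕ in atTop, C * n * (log n - 3) ≤ w n := by
  obtain ⟨K, hK⟩ := exists_eventually_add_le_of_sub_le_sub
    (f := fun n : ℕ => C * ((n : ℝ) * log n - 2 * n)) (by
      filter_upwards [h, eventually_ge_atTop 1] with n hn hn1
      have hx := add_one_mul_log_add_one_le (x := n) (by exact_mod_cast hn1)
      push_cast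
      nlinarith [mul_le_mul_of_nonneg_left hx hC.le])
  filter_upwards [hK, (tendsto_natCast_atTop_atTop.const_mul_atTop hC).eventually_ge_atTop (-K)]
    with n hn hnK
  linarith [show C * n * (log n - 3) = C * (n * log n - 2 * n) - C * n by ring]

theorem limsup_mul_natCast_mul_log_le_of_le_inv {u : ℕ → ℝ} {C : ℝ} (hC : 0 < C) (c : ℝ)
    (h : ∀ᶠ n : ℕ in atTop, C * n * (log n - c) ≤ (u n)⁻¹) :
    limsup (fun n : ℕ => ((u n * n * log n : ℝ) : EReal)) atTop ≤
      ((1 / C : ℝ) : EReal) := by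
  have hlog : Tendsto (fun n : ℕ => log n - c) atTop atTop :=
    tendsto_atTop_add_const_right _ _ (tendsto_log_atTop.comp tendsto_natCast_atTop_atTop)
  have hbound : ∀ᶠ n : ℕ in atTop, u n * n * log n ≤ 1 / C * (1 + c / (log n - c)) := by
    filter_upwards [h, hlog.eventually_gt_atTop 0, eventually_ge_atTop 1] with n hn hpos hn1
    have hn0 : (0 : ℝ) < n := by exact_mod_cast hn1
    have hnlog : 0 ≤ n * log n := mul_nonneg hn0.le (log_nonneg (Nat.one_le_cast.2 hn1))
    have hu : u n ≤ (C * n * (log n - c))⁻¹ := by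
      simpa using inv_anti₀ (by positivity) hn
    calc u n * n * log n ≤ (C * n * (log n - c))⁻¹ * (n * log n) := by
          rw [mul_assoc]
          exact mul_le_mul_of_nonneg_right hu hnlog
      _ = 1 / C * (1 + c / (log n - c)) := by field_simp; ring
  have hlim : Tendsto (fun n : ℕ => 1 / C * (1 + c / (log n - c))) atTop (nhds (1 / C)) := by
    simpa using ((tendsto_const_nhds.div_atTop hlog).const_add 1).const_mul (1 / C)
  calc limsup (fun n : ℕ => ((u n * n * log n : ℝ) : EReal)) atTop
      ≤ limsup (fun n : ℕ => ((1 / C * (1 + c / (log n - c)) : ℝ) : EReal)) atTop :=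
        limsup_le_limsup (hbound.mono fun n hn => EReal.coe_le_coe_iff.2 hn)
    _ = ((1 / C : ℝ) : EReal) := ((continuous_coe_real_ereal.tendsto _).comp hlim).limsup_eq

theorem stmt_3_general (u : ℕ → ℝ) (hpos : ∀ n, 0 < u n)
    (hlim : Tendsto u atTop (nhds 0))
    (C : ℝ) (hC : 0 < C)
    (hrec : ∀ᶠ n in atTop, C * u n ^ 2 * Real.log (1 / u n) ≤ u n - u (n + 1)) :
    limsup (fun n : ℕ => ((u n * n * Real.log n : ℝ) : EReal)) atTop ≤
      ((1 / C : ℝ) : EReal) := by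
  set w : ℕ → ℝ := fun n => (u n)⁻¹
  have hw : Tendsto w atTop atTop :=
    (tendsto_nhdsWithin_iff.2 ⟨hlim, .of_forall hpos⟩).inv_tendsto_nhdsGT_zero
  have hstep : ∀ᶠ n in atTop, w n + C * log (w n) ≤ w (n + 1) := by
    filter_upwards [hrec, hlim.eventually_le_const one_pos] with n hn hn1
    exact inv_add_mul_log_inv_le_inv (hpos n) (hpos (n + 1)) hn1 hC.le hn
  have hstep' : ∀ᶠ n : ℕ in atTop, w n + C * log n ≤ w (n + 1) := by
    filter_upwards [hstep, eventually_natCast_le_of_add_mul_log_le_succ hC hw hstep,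
      eventually_ge_atTop 1] with n hn hnw hn1
    have : log n ≤ log (w n) := log_le_log (by exact_mod_cast hn1) hnw
    nlinarith
  exact limsup_mul_natCast_mul_log_le_of_le_inv hC 3
    (eventually_mul_log_sub_le_of_add_mul_log_le_succ hC hstep')

theorem stmt_3 (u : ℕ → ℝ) (hpos : ∀ n, 0 < u n)
    (hmono : ∀ n, u (n + 1) ≤ u n)
    (hlim : Tendsto u atTop (nhds 0))
    (C : ℝ) (hC : 0 < C)
    (hrec : ∀ᶠ n in atTop, C * u n ^ 2 * Real.log (1 / u n) ≤ u n - u (n + 1)) :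
    limsup (fun n : ℕ => ((u n * n * Real.log n : ℝ) : EReal)) atTop ≤
      ((1 / C : ℝ) : EReal) :=
  stmt_3_general u hpos hlim C hC hrec
end

section
/- Let ξ be a non-negative random variable on a probability space with 0 < E[ξ] < ∞. Let φ : [0,∞) → [0,∞) be a convex, continuously differentiable function such that for some constants C > 0 and q ≥ 1 one has φ(x) ≤ C(1 + x^q) for all x ≥ 0, and assume E[ξ^q] < ∞. Then E[ φ( (ξ/(1+ξ)) / E[ξ/(1+ξ)] ) ] ≤ E[ φ( ξ / E[ξ] ) ]. -/
/-!
Write `E = 𝔼[ξ]`, `m = 𝔼[ξ/(1+ξ)]`, `U = ξ/E`, `V = ξ/((1+ξ)m)` and `c = 1/m - 1/E ≥ 0`.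
Then `V - U = ξ (c - V)`, so `V` always lies between `U` and `c`. Since the derivative
of a differentiable convex `φ` is monotone, this gives the pointwise bound
`φ V - φ U ≤ φ'(c) (V - U)`, and integrating it kills the right-hand side since `𝔼[U] = 𝔼[V] = 1`.
-/

open MeasureTheory Real

lemma Set.mem_uIcc_of_sub_eq_mul_sub {a b c t : ℝ} (ht : 0 ≤ t) (h : a - b = t * (c - a)) :
    a ∈ Set.uIcc b c := by
  rw [Set.mem_uIcc]
  rcases le_total a c with hac | hca
  · exact Or.inl ⟨by nlinarith, hac⟩
  · exact Or.inr ⟨hca, by nlinarith⟩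

lemma ConvexOn.sub_le_derivWithin_mul_sub {S : Set ℝ} {f : ℝ → ℝ} (hfc : ConvexOn ℝ S f)
    (hfd : DifferentiableOn ℝ f S) {a b c : ℝ} (hb : b ∈ S) (hc : c ∈ S)
    (ha : a ∈ Set.uIcc b c) : f a - f b ≤ derivWithin f S c * (a - b) := by
  have haS : a ∈ S := hfc.1.ordConnected.uIcc_subset hb hc ha
  rcases Set.mem_uIcc.1 ha with ⟨hba, hac⟩ | ⟨hca, hab⟩
  · rcases hba.eq_or_lt with rfl | hba
    · simp
    have hslope : slope f b a ≤ derivWithin f S c :=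
      (hfc.slope_le_derivWithin hb haS hba (hfd a haS)).trans
        (hfc.monotoneOn_derivWithin hfd haS hc hac)
    rwa [slope_def_field, div_le_iff₀ (sub_pos.2 hba)] at hslope
  · rcases hab.eq_or_lt with rfl | hab
    · simp
    have hslope : derivWithin f S c ≤ slope f a b :=
      (hfc.monotoneOn_derivWithin hfd hc haS hca).trans
        (hfc.derivWithin_le_slope haS hb hab (hfd a haS))
    rw [slope_def_field, le_div_iff₀ (sub_pos.2 hab)] at hslope
    linarith

lemma div_one_add_div_sub_div_eq {x m E : ℝ} (hx : 0 ≤ x) (hm : m ≠ 0) (hE : E ≠ 0) :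
    x / (1 + x) / m - x / E = x * ((1 / m - 1 / E) - x / (1 + x) / m) := by
  have : 1 + x ≠ 0 := by positivity
  field_simp
  ring

section Integrability

variable {Ω : Type*} [MeasurableSpace Ω] {μ : Measure Ω}

lemma ContinuousOn.comp_aestronglyMeasurable_of_nonneg {φ : ℝ → ℝ}
    (hφ : ContinuousOn φ (Set.Ici 0)) {f : Ω → ℝ} (hf : AEStronglyMeasurable f μ)
    (hf0 : ∀ ω, 0 ≤ f ω) : AEStronglyMeasurable (fun ω => φ (f ω)) μ := by
  have hφmax : Continuous fun y => φ (max y 0) :=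
    hφ.comp_continuous (continuous_id.max continuous_const) fun y => le_max_right y 0
  exact (hφmax.comp_aestronglyMeasurable hf).congr
    (.of_forall fun ω => by simp [max_eq_left (hf0 ω)])

lemma MeasureTheory.Integrable.rpow_div_const {f : Ω → ℝ} {q : ℝ}
    (hf : Integrable (fun ω => f ω ^ q) μ) (hf0 : ∀ ω, 0 ≤ f ω) {a : ℝ} (ha : 0 ≤ a) :
    Integrable (fun ω => (f ω / a) ^ q) μ := by
  simpa only [div_rpow (hf0 _) ha] using hf.div_const (a ^ q)

lemma MeasureTheory.Integrable.comp_of_le_mul_one_add_rpow [IsFiniteMeasure μ]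
    {φ : ℝ → ℝ} {C q : ℝ}
    (hφ : ContinuousOn φ (Set.Ici 0)) (hφnn : ∀ x, 0 ≤ x → 0 ≤ φ x)
    (hgrowth : ∀ x, 0 ≤ x → φ x ≤ C * (1 + x ^ q)) {f : Ω → ℝ}
    (hf : AEStronglyMeasurable f μ) (hf0 : ∀ ω, 0 ≤ f ω)
    (hfq : Integrable (fun ω => f ω ^ q) μ) :
    Integrable (fun ω => φ (f ω)) μ := by
  refine ((integrable_const 1).add hfq).const_mul C |>.mono'
    (hφ.comp_aestronglyMeasurable_of_nonneg hf hf0) (.of_forall fun ω => ?_)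
  rw [norm_of_nonneg (hφnn _ (hf0 ω))]
  exact hgrowth _ (hf0 ω)

lemma integral_comp_le_of_sub_le_mul_sub {φ : ℝ → ℝ} {f g : Ω → ℝ}
    (hf : Integrable f μ) (hg : Integrable g μ)
    (hφf : Integrable (fun ω => φ (f ω)) μ) (hφg : Integrable (fun ω => φ (g ω)) μ)
    (hfg : ∫ ω, f ω ∂μ = ∫ ω, g ω ∂μ) (K : ℝ)
    (h : ∀ ω, φ (f ω) - φ (g ω) ≤ K * (f ω - g ω)) :
    ∫ ω, φ (f ω) ∂μ ≤ ∫ ω, φ (g ω) ∂μ := by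
  have hlin : Integrable (fun ω => K * (f ω - g ω)) μ := (hf.sub hg).const_mul K
  calc ∫ ω, φ (f ω) ∂μ ≤ ∫ ω, (φ (g ω) + K * (f ω - g ω)) ∂μ :=
        integral_mono hφf (hφg.add hlin) fun ω => by linarith [h ω]
    _ = ∫ ω, φ (g ω) ∂μ := by
        rw [integral_add hφg hlin, integral_const_mul, integral_sub hf hg, hfg]
        ring

variable {ξ : Ω → ℝ}

lemma MeasureTheory.Integrable.div_one_add (hint : Integrable ξ μ) (hnn : ∀ ω, 0 ≤ ξ ω) :
    Integrable (fun ω => ξ ω / (1 + ξ ω)) μ :=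
  hint.mono'
    (hint.aemeasurable.div (aemeasurable_const.add hint.aemeasurable)).aestronglyMeasurable
    (.of_forall fun ω => by
      rw [norm_of_nonneg (div_nonneg (hnn ω) (by linarith [hnn ω]))]
      exact div_le_self (hnn ω) (by linarith [hnn ω]))

lemma MeasureTheory.Integrable.div_one_add_rpow {q : ℝ}
    (hmom : Integrable (fun ω => ξ ω ^ q) μ)
    (hint : Integrable ξ μ) (hnn : ∀ ω, 0 ≤ ξ ω) (hq : 0 ≤ q) :
    Integrable (fun ω => (ξ ω / (1 + ξ ω)) ^ q) μ :=
  hmom.mono' ((hint.div_one_add hnn).aemeasurable.pow_const q).aestronglyMeasurable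
    (.of_forall fun ω => by
      have h0 : 0 ≤ ξ ω / (1 + ξ ω) := div_nonneg (hnn ω) (by linarith [hnn ω])
      rw [norm_of_nonneg (rpow_nonneg h0 q)]
      exact rpow_le_rpow h0 (div_le_self (hnn ω) (by linarith [hnn ω])) hq)

lemma integral_div_one_add_pos (hint : Integrable ξ μ) (hnn : ∀ ω, 0 ≤ ξ ω)
    (hpos : 0 < ∫ ω, ξ ω ∂μ) : 0 < ∫ ω, ξ ω / (1 + ξ ω) ∂μ := by
  have hsupp : Function.support (fun ω => ξ ω / (1 + ξ ω)) = Function.support ξ := by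
    ext ω
    simp [(by linarith [hnn ω] : 1 + ξ ω ≠ 0)]
  rw [integral_pos_iff_support_of_nonneg
    (fun ω => div_nonneg (hnn ω) (by linarith [hnn ω])) (hint.div_one_add hnn), hsupp,
    ← integral_pos_iff_support_of_nonneg hnn hint]
  exact hpos

lemma integral_div_integral_self {f : Ω → ℝ} (hf : ∫ ω, f ω ∂μ ≠ 0) :
    ∫ ω, f ω / ∫ ω', f ω' ∂μ ∂μ = 1 := by
  rw [integral_div, div_self hf]

end Integrability

theorem stmt_4_general {Ω : Type*} [MeasurableSpace Ω] (μ : Measure Ω)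
    [IsProbabilityMeasure μ]
    (ξ : Ω → ℝ) (hnn : ∀ ω, 0 ≤ ξ ω)
    (hint : Integrable ξ μ) (hpos : 0 < ∫ ω, ξ ω ∂μ)
    (φ : ℝ → ℝ) (hφnn : ∀ x, 0 ≤ x → 0 ≤ φ x)
    (hconv : ConvexOn ℝ (Set.Ici 0) φ)
    (hdiff : ContDiffOn ℝ 1 φ (Set.Ici 0))
    (C q : ℝ) (hq : 1 ≤ q)
    (hgrowth : ∀ x, 0 ≤ x → φ x ≤ C * (1 + x ^ q))
    (hmom : Integrable (fun ω => ξ ω ^ q) μ) :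
    ∫ ω, φ ((ξ ω / (1 + ξ ω)) / ∫ ω', ξ ω' / (1 + ξ ω') ∂μ) ∂μ ≤
      ∫ ω, φ (ξ ω / ∫ ω', ξ ω' ∂μ) ∂μ := by
  set η : Ω → ℝ := fun ω => ξ ω / (1 + ξ ω)
  set E := ∫ ω, ξ ω ∂μ
  set m := ∫ ω, η ω ∂μ
  have hη0 : ∀ ω, 0 ≤ η ω := fun ω => div_nonneg (hnn ω) (by linarith [hnn ω])
  have hηξ : ∀ ω, η ω ≤ ξ ω := fun ω => div_le_self (hnn ω) (by linarith [hnn ω])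
  have hη_int : Integrable η μ := hint.div_one_add hnn
  have hηq : Integrable (fun ω => η ω ^ q) μ := hmom.div_one_add_rpow hint hnn (by linarith)
  have hm : 0 < m := integral_div_one_add_pos hint hnn hpos
  have hc : 0 ≤ 1 / m - 1 / E :=
    sub_nonneg.2 (one_div_le_one_div_of_le hm (integral_mono hη_int hint hηξ))
  have hφc : ContinuousOn φ (Set.Ici 0) := hdiff.continuousOn
  refine integral_comp_le_of_sub_le_mul_sub (hη_int.div_const m) (hint.div_const E)
    (.comp_of_le_mul_one_add_rpow hφc hφnn hgrowth (hη_int.div_const m).1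
      (fun ω => div_nonneg (hη0 ω) hm.le) (hηq.rpow_div_const hη0 hm.le))
    (.comp_of_le_mul_one_add_rpow hφc hφnn hgrowth (hint.div_const E).1
      (fun ω => div_nonneg (hnn ω) hpos.le) (hmom.rpow_div_const hnn hpos.le))
    ((integral_div_integral_self hm.ne').trans (integral_div_integral_self hpos.ne').symm)
    (derivWithin φ (Set.Ici 0) (1 / m - 1 / E)) fun ω => ?_
  refine hconv.sub_le_derivWithin_mul_sub (hdiff.differentiableOn one_ne_zero)
    (div_nonneg (hnn ω) hpos.le) hc (Set.mem_uIcc_of_sub_eq_mul_sub (hnn ω) ?_)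
  exact div_one_add_div_sub_div_eq (hnn ω) hm.ne' hpos.ne'

theorem stmt_4 {Ω : Type*} [MeasurableSpace Ω] (μ : Measure Ω)
    [IsProbabilityMeasure μ]
    (ξ : Ω → ℝ) (hmeas : Measurable ξ) (hnn : ∀ ω, 0 ≤ ξ ω)
    (hint : Integrable ξ μ) (hpos : 0 < ∫ ω, ξ ω ∂μ)
    (φ : ℝ → ℝ) (hφnn : ∀ x, 0 ≤ x → 0 ≤ φ x)
    (hconv : ConvexOn ℝ (Set.Ici 0) φ)
    (hdiff : ContDiffOn ℝ 1 φ (Set.Ici 0))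
    (C q : ℝ) (hC : 0 < C) (hq : 1 ≤ q)
    (hgrowth : ∀ x, 0 ≤ x → φ x ≤ C * (1 + x ^ q))
    (hmom : Integrable (fun ω => ξ ω ^ q) μ) :
    ∫ ω, φ ((ξ ω / (1 + ξ ω)) / ∫ ω', ξ ω' / (1 + ξ ω') ∂μ) ∂μ ≤
      ∫ ω, φ (ξ ω / ∫ ω', ξ ω' ∂μ) ∂μ :=
  stmt_4_general μ ξ hnn hint hpos φ hφnn hconv hdiff C q hq hgrowth hmom
end

section
/- Let M be a non-negative random variable and let κ ∈ (1,2]. Suppose there exist constants 0 < c ≤ C and s₀ > 0 such that c·s^{−κ} ≤ P(M > s) ≤ C·s^{−κ} for all s ≥ s₀. Let p be a real number with κ/2 < p < κ. Then there exist constants 0 < c' ≤ C' and a₀ > 0 such that for all a ≥ a₀: c'·a^{p−κ} ≤ E[ (M²/(a+M))^p ] ≤ C'·a^{p−κ}. -/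
/-!
On `{M > a}` one has `M²/(a+M) ≥ a/2`, so the lower tail bound gives
`φ_p(a) ≥ (a/2)^p · c a^{-κ}`.

For the upper bound write `φ_p(a) = p ∫₀^∞ t^{p-1} P(M²/(a+M) > t) dt`. Since
`M²/(a+M) ≤ min (M, M²/a)`, the event `{M²/(a+M) > t}` lies in `{M > t}` and in `{M > √(at)}`.
Bound its probability by `1` for `t ≤ s₀²/a`, by `C (at)^{-κ/2}` for `s₀²/a < t ≤ a` and by
`C t^{-κ}` for `t > a`. The middle integral converges at `0` because `p > κ/2`, the last one at
`∞` because `p < κ`, and both are of order `a^{p-κ}`; the first is `s₀^{2p} a^{-p}`, which is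
at most `s₀^{2p} a^{p-κ}` for `a ≥ 1` because `κ ≤ 2p`.
-/

open MeasureTheory Real Set
open scoped ENNReal

theorem lintegral_Ioc_rpow {b r : ℝ} (hb : 0 ≤ b) (hr : -1 < r) :
    ∫⁻ t in Ioc 0 b, ENNReal.ofReal (t ^ r) = ENNReal.ofReal (b ^ (r + 1) / (r + 1)) := by
  have hint : IntegrableOn (fun t : ℝ => t ^ r) (Ioc 0 b) :=
    (intervalIntegrable_iff_integrableOn_Ioc_of_le hb).1
      (intervalIntegral.intervalIntegrable_rpow' hr)
  rw [← ofReal_integral_eq_lintegral_ofReal hint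
      ((ae_restrict_iff' measurableSet_Ioc).2 (ae_of_all _ fun t ht => rpow_nonneg ht.1.le r)),
    ← intervalIntegral.integral_of_le hb, integral_rpow (Or.inl hr),
    zero_rpow (by linarith), sub_zero]

theorem lintegral_Ioi_rpow {b r : ℝ} (hb : 0 < b) (hr : r < -1) :
    ∫⁻ t in Ioi b, ENNReal.ofReal (t ^ r) = ENNReal.ofReal (b ^ (r + 1) / -(r + 1)) := by
  rw [← ofReal_integral_eq_lintegral_ofReal (integrableOn_Ioi_rpow_of_lt hr hb)
      ((ae_restrict_iff' measurableSet_Ioi).2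
        (ae_of_all _ fun t ht => rpow_nonneg (hb.trans ht).le r)),
    integral_Ioi_rpow_of_lt hr hb, div_neg, neg_div]

theorem setLIntegral_mul_rpow_le_of_le_rpow {S : Set ℝ} (hS : MeasurableSet S)
    (hS₀ : S ⊆ Ioi 0) {g : ℝ → ℝ≥0∞} {K β : ℝ} (hK : 0 ≤ K)
    (hg : ∀ t ∈ S, g t ≤ ENNReal.ofReal (K * t ^ (-β))) (p : ℝ) :
    ∫⁻ t in S, g t * ENNReal.ofReal (t ^ (p - 1)) ≤
      ENNReal.ofReal K * ∫⁻ t in S, ENNReal.ofReal (t ^ (p - β - 1)) := by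
  rw [← lintegral_const_mul' _ _ ENNReal.ofReal_ne_top]
  refine setLIntegral_mono' hS fun t ht => ?_
  have ht₀ : 0 < t := hS₀ ht
  calc g t * ENNReal.ofReal (t ^ (p - 1))
      ≤ ENNReal.ofReal (K * t ^ (-β)) * ENNReal.ofReal (t ^ (p - 1)) := by
        gcongr; exact hg t ht
    _ = ENNReal.ofReal K * ENNReal.ofReal (t ^ (p - β - 1)) := by
      rw [← ENNReal.ofReal_mul (by positivity), ← ENNReal.ofReal_mul hK, mul_assoc,
        ← rpow_add ht₀, neg_add_eq_sub, sub_sub, sub_sub, add_comm β]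

section SqDivAdd

variable {a m t : ℝ}

theorem sq_div_add_le_self (ha : 0 ≤ a) (hm : 0 ≤ m) : m ^ 2 / (a + m) ≤ m := by
  rcases hm.eq_or_lt with rfl | hm
  · simp
  rw [div_le_iff₀ (by positivity)]
  nlinarith

theorem mul_sq_div_add_le_sq (ha : 0 ≤ a) (hm : 0 ≤ m) : a * (m ^ 2 / (a + m)) ≤ m ^ 2 := by
  rcases hm.eq_or_lt with rfl | hm
  · simp
  rw [mul_div_assoc', div_le_iff₀ (by positivity)]
  nlinarith [sq_nonneg m]

theorem half_le_sq_div_add (ha : 0 < a) (ham : a ≤ m) : a / 2 ≤ m ^ 2 / (a + m) := by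
  rw [div_le_div_iff₀ two_pos (by linarith)]
  nlinarith

theorem sqrt_mul_lt_of_lt_sq_div_add (ha : 0 < a) (hm : 0 ≤ m) (ht : 0 ≤ t)
    (h : t < m ^ 2 / (a + m)) : √(a * t) < m := by
  have hlt : a * t < m ^ 2 :=
    (mul_lt_mul_of_pos_left h ha).trans_le (mul_sq_div_add_le_sq ha.le hm)
  simpa [sqrt_sq hm] using sqrt_lt_sqrt (by positivity) hlt

end SqDivAdd

/-- `φ_p(a)` in the paper's notation. -/
noncomputable def sqDivAddMoment {Ω : Type*} [MeasurableSpace Ω] (μ : Measure Ω) (M : Ω → ℝ)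
    (p a : ℝ) : ℝ≥0∞ :=
  ∫⁻ ω, ENNReal.ofReal ((M ω ^ 2 / (a + M ω)) ^ p) ∂μ

section Moment

variable {Ω : Type*} [MeasurableSpace Ω] {μ : Measure Ω} {M : Ω → ℝ} {c C κ s₀ p a t : ℝ}

theorem ofReal_mul_rpow_le_sqDivAddMoment (hM : AEMeasurable M μ)
    (htail : ∀ s, s₀ ≤ s → ENNReal.ofReal (c * s ^ (-κ)) ≤ μ {ω | s < M ω})
    (hp : 0 ≤ p) (ha : 0 < a) (hs₀a : s₀ ≤ a) :
    ENNReal.ofReal (c * 2⁻¹ ^ p * a ^ (p - κ)) ≤ sqDivAddMoment μ M p a := by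
  calc ENNReal.ofReal (c * 2⁻¹ ^ p * a ^ (p - κ))
      = ENNReal.ofReal ((a / 2) ^ p) * ENNReal.ofReal (c * a ^ (-κ)) := by
        rw [← ENNReal.ofReal_mul (by positivity), div_eq_mul_inv, mul_rpow ha.le (by norm_num),
          sub_eq_add_neg, rpow_add ha]
        ring_nf
    _ ≤ ENNReal.ofReal ((a / 2) ^ p) * μ {ω | a < M ω} := by gcongr; exact htail a hs₀a
    _ ≤ ENNReal.ofReal ((a / 2) ^ p) *
          μ {ω | ENNReal.ofReal ((a / 2) ^ p) ≤ ENNReal.ofReal ((M ω ^ 2 / (a + M ω)) ^ p)} := by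
        refine mul_le_mul_right (measure_mono fun ω (hω : a < M ω) => ?_) _
        exact ENNReal.ofReal_le_ofReal <|
          rpow_le_rpow (by positivity) (half_le_sq_div_add ha hω.le) hp
    _ ≤ sqDivAddMoment μ M p a := mul_meas_ge_le_lintegral₀ (by fun_prop) _

theorem meas_lt_sq_div_add_le_of_sq_le_mul (hnn : ∀ ω, 0 ≤ M ω) (hs₀ : 0 ≤ s₀)
    (htail : ∀ s, s₀ ≤ s → μ {ω | s < M ω} ≤ ENNReal.ofReal (C * s ^ (-κ)))
    (ha : 0 < a) (ht : 0 ≤ t) (hst : s₀ ^ 2 ≤ a * t) :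
    μ {ω | t < M ω ^ 2 / (a + M ω)} ≤ ENNReal.ofReal (C * a ^ (-(κ / 2)) * t ^ (-(κ / 2))) :=
  calc μ {ω | t < M ω ^ 2 / (a + M ω)}
      ≤ μ {ω | √(a * t) < M ω} :=
        measure_mono fun ω hω => sqrt_mul_lt_of_lt_sq_div_add ha (hnn ω) ht hω
    _ ≤ ENNReal.ofReal (C * √(a * t) ^ (-κ)) := htail _ ((le_sqrt hs₀ (by positivity)).2 hst)
    _ = ENNReal.ofReal (C * a ^ (-(κ / 2)) * t ^ (-(κ / 2))) := by
        rw [sqrt_eq_rpow, ← rpow_mul (by positivity), mul_rpow ha.le ht, mul_assoc]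
        ring_nf

theorem meas_lt_sq_div_add_le (hnn : ∀ ω, 0 ≤ M ω)
    (htail : ∀ s, s₀ ≤ s → μ {ω | s < M ω} ≤ ENNReal.ofReal (C * s ^ (-κ)))
    (ha : 0 ≤ a) (hst : s₀ ≤ t) :
    μ {ω | t < M ω ^ 2 / (a + M ω)} ≤ ENNReal.ofReal (C * t ^ (-κ)) :=
  (measure_mono fun ω hω => lt_of_lt_of_le hω (sq_div_add_le_self ha (hnn ω))).trans
    (htail t hst)

theorem lintegral_meas_lt_sq_div_add_mul_rpow_le [IsProbabilityMeasure μ]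
    (hnn : ∀ ω, 0 ≤ M ω) (hC : 0 ≤ C) (hs₀ : 0 < s₀)
    (htail : ∀ s, s₀ ≤ s → μ {ω | s < M ω} ≤ ENNReal.ofReal (C * s ^ (-κ)))
    (hp₁ : κ / 2 < p) (hp₂ : p < κ) (hs₀a : s₀ ≤ a) :
    ∫⁻ t in Ioi 0, μ {ω | t < M ω ^ 2 / (a + M ω)} * ENNReal.ofReal (t ^ (p - 1)) ≤
      ENNReal.ofReal ((s₀ ^ 2 / a) ^ p / p) +
        (ENNReal.ofReal (C * a ^ (-(κ / 2))) * ENNReal.ofReal (a ^ (p - κ / 2) / (p - κ / 2)) +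
          ENNReal.ofReal C * ENNReal.ofReal (a ^ (p - κ) / (κ - p))) := by
  have ha : 0 < a := hs₀.trans_le hs₀a
  set T := s₀ ^ 2 / a
  have hT : 0 < T := by positivity
  have hTa : T ≤ a := by
    rw [div_le_iff₀ ha]; nlinarith
  rw [← Ioc_union_Ioi_eq_Ioi hT.le, lintegral_union measurableSet_Ioi Ioc_disjoint_Ioi_same,
    ← Ioc_union_Ioi_eq_Ioi hTa, lintegral_union measurableSet_Ioi Ioc_disjoint_Ioi_same]
  gcongr ?_ + (?_ + ?_)
  · calc _ ≤ ∫⁻ t in Ioc 0 T, ENNReal.ofReal (t ^ (p - 1)) :=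
          setLIntegral_mono' measurableSet_Ioc fun t _ => mul_le_of_le_one_left' prob_le_one
      _ = _ := by rw [lintegral_Ioc_rpow hT.le (by linarith), sub_add_cancel]
  · calc _ ≤ ENNReal.ofReal (C * a ^ (-(κ / 2))) *
            ∫⁻ t in Ioc T a, ENNReal.ofReal (t ^ (p - κ / 2 - 1)) :=
          setLIntegral_mul_rpow_le_of_le_rpow measurableSet_Ioc
            (Ioc_subset_Ioi_self.trans (Ioi_subset_Ioi hT.le)) (by positivity)
            (fun t ht => meas_lt_sq_div_add_le_of_sq_le_mul hnn hs₀.le htail ha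
              (hT.trans ht.1).le ((div_lt_iff₀' ha).1 ht.1).le) p
      _ ≤ ENNReal.ofReal (C * a ^ (-(κ / 2))) *
            ∫⁻ t in Ioc 0 a, ENNReal.ofReal (t ^ (p - κ / 2 - 1)) := by
          gcongr
      _ = _ := by rw [lintegral_Ioc_rpow ha.le (by linarith), sub_add_cancel]
  · calc _ ≤ ENNReal.ofReal C * ∫⁻ t in Ioi a, ENNReal.ofReal (t ^ (p - κ - 1)) :=
          setLIntegral_mul_rpow_le_of_le_rpow measurableSet_Ioi (Ioi_subset_Ioi ha.le) hC
            (fun t ht => meas_lt_sq_div_add_le hnn htail ha.le (hs₀a.trans ht.le)) p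
      _ = _ := by rw [lintegral_Ioi_rpow ha (by linarith), sub_add_cancel, neg_sub]

theorem sqDivAddMoment_le [IsProbabilityMeasure μ] (hM : AEMeasurable M μ)
    (hnn : ∀ ω, 0 ≤ M ω) (hC : 0 ≤ C) (hs₀ : 0 < s₀)
    (htail : ∀ s, s₀ ≤ s → μ {ω | s < M ω} ≤ ENNReal.ofReal (C * s ^ (-κ)))
    (hp₁ : κ / 2 < p) (hp₂ : p < κ) (hs₀a : s₀ ≤ a) (ha₁ : 1 ≤ a) :
    sqDivAddMoment μ M p a ≤
      ENNReal.ofReal ((s₀ ^ (2 * p) + p * C / (p - κ / 2) + p * C / (κ - p)) * a ^ (p - κ)) := by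
  have hp : 0 < p := by linarith
  have hp₁' : 0 < p - κ / 2 := by linarith
  have hp₂' : 0 < κ - p := by linarith
  have ha : 0 < a := by linarith
  have hpow : a ^ (-(κ / 2)) * a ^ (p - κ / 2) = a ^ (p - κ) := by
    rw [← rpow_add ha]; ring_nf
  have hfirst : (s₀ ^ 2 / a) ^ p ≤ s₀ ^ (2 * p) * a ^ (p - κ) := by
    rw [div_rpow (by positivity) ha.le, ← rpow_natCast, ← rpow_mul hs₀.le, div_eq_mul_inv,
      ← rpow_neg ha.le]
    push_cast
    exact mul_le_mul_of_nonneg_left (rpow_le_rpow_of_exponent_le ha₁ (by linarith))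
      (by positivity)
  calc sqDivAddMoment μ M p a
      = ENNReal.ofReal p *
          ∫⁻ t in Ioi 0, μ {ω | t < M ω ^ 2 / (a + M ω)} * ENNReal.ofReal (t ^ (p - 1)) :=
        lintegral_rpow_eq_lintegral_meas_lt_mul μ
          (ae_of_all _ fun ω => by have := hnn ω; positivity) (by fun_prop) hp
    _ ≤ ENNReal.ofReal p * (ENNReal.ofReal ((s₀ ^ 2 / a) ^ p / p) +
          (ENNReal.ofReal (C * a ^ (-(κ / 2))) * ENNReal.ofReal (a ^ (p - κ / 2) / (p - κ / 2)) +
            ENNReal.ofReal C * ENNReal.ofReal (a ^ (p - κ) / (κ - p)))) := by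
        gcongr
        exact lintegral_meas_lt_sq_div_add_mul_rpow_le hnn hC hs₀ htail hp₁ hp₂ hs₀a
    _ = ENNReal.ofReal
          ((s₀ ^ 2 / a) ^ p + (p * C / (p - κ / 2) + p * C / (κ - p)) * a ^ (p - κ)) := by
        rw [← ENNReal.ofReal_mul (by positivity), ← ENNReal.ofReal_mul hC,
          ← ENNReal.ofReal_add (by positivity) (by positivity),
          ← ENNReal.ofReal_add (by positivity) (by positivity), ← ENNReal.ofReal_mul hp.le,
          ← hpow]
        congr 1
        field_simp
    _ ≤ _ := ENNReal.ofReal_le_ofReal (by linarith)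

end Moment

theorem stmt_7_general {Ω : Type*} [MeasurableSpace Ω] (μ : Measure Ω)
    [IsProbabilityMeasure μ]
    (M : Ω → ℝ) (hmeas : Measurable M) (hnn : ∀ ω, 0 ≤ M ω)
    (κ : ℝ)
    (c C s₀ : ℝ) (hc : 0 < c) (hcC : c ≤ C) (hs₀ : 0 < s₀)
    (htail : ∀ s : ℝ, s₀ ≤ s →
      ENNReal.ofReal (c * s ^ (-κ)) ≤ μ {ω | s < M ω} ∧
      μ {ω | s < M ω} ≤ ENNReal.ofReal (C * s ^ (-κ)))
    (p : ℝ) (hp1 : κ / 2 < p) (hp2 : p < κ) :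
    ∃ c' C' a₀ : ℝ, 0 < c' ∧ c' ≤ C' ∧ 0 < a₀ ∧
      ∀ a : ℝ, a₀ ≤ a →
        ENNReal.ofReal (c' * a ^ (p - κ)) ≤
          ∫⁻ ω, ENNReal.ofReal ((M ω ^ 2 / (a + M ω)) ^ p) ∂μ ∧
        ∫⁻ ω, ENNReal.ofReal ((M ω ^ 2 / (a + M ω)) ^ p) ∂μ ≤
          ENNReal.ofReal (C' * a ^ (p - κ)) := by
  have hp : 0 < p := by linarith
  set c' := c * 2⁻¹ ^ p
  set K := s₀ ^ (2 * p) + p * C / (p - κ / 2) + p * C / (κ - p)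
  refine ⟨c', max c' K, max s₀ 1, by positivity, le_max_left _ _, by positivity,
    fun a ha => ?_⟩
  have ha₀ : 0 < a := zero_lt_one.trans_le (le_of_max_le_right ha)
  refine ⟨?_, ?_⟩
  · exact ofReal_mul_rpow_le_sqDivAddMoment hmeas.aemeasurable (fun s hs => (htail s hs).1)
      hp.le ha₀ (le_of_max_le_left ha)
  · calc sqDivAddMoment μ M p a ≤ ENNReal.ofReal (K * a ^ (p - κ)) :=
          sqDivAddMoment_le hmeas.aemeasurable hnn (hc.le.trans hcC) hs₀
            (fun s hs => (htail s hs).2) hp1 hp2 (le_of_max_le_left ha) (le_of_max_le_right ha)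
      _ ≤ ENNReal.ofReal (max c' K * a ^ (p - κ)) := by gcongr; exact le_max_right _ _

theorem stmt_7 {Ω : Type*} [MeasurableSpace Ω] (μ : Measure Ω)
    [IsProbabilityMeasure μ]
    (M : Ω → ℝ) (hmeas : Measurable M) (hnn : ∀ ω, 0 ≤ M ω)
    (κ : ℝ) (hκ1 : 1 < κ) (hκ2 : κ ≤ 2)
    (c C s₀ : ℝ) (hc : 0 < c) (hcC : c ≤ C) (hs₀ : 0 < s₀)
    (htail : ∀ s : ℝ, s₀ ≤ s →
      ENNReal.ofReal (c * s ^ (-κ)) ≤ μ {ω | s < M ω} ∧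
      μ {ω | s < M ω} ≤ ENNReal.ofReal (C * s ^ (-κ)))
    (p : ℝ) (hp1 : κ / 2 < p) (hp2 : p < κ) :
    ∃ c' C' a₀ : ℝ, 0 < c' ∧ c' ≤ C' ∧ 0 < a₀ ∧
      ∀ a : ℝ, a₀ ≤ a →
        ENNReal.ofReal (c' * a ^ (p - κ)) ≤
          ∫⁻ ω, ENNReal.ofReal ((M ω ^ 2 / (a + M ω)) ^ p) ∂μ ∧
        ∫⁻ ω, ENNReal.ofReal ((M ω ^ 2 / (a + M ω)) ^ p) ∂μ ≤
          ENNReal.ofReal (C' * a ^ (p - κ)) :=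
  stmt_7_general μ M hmeas hnn κ c C s₀ hc hcC hs₀ htail p hp1 hp2
end

section
/- Let M be a non-negative random variable with E[M²] < ∞ and let p be a real number with 1 < p < 2. Then there exists a constant C > 0 such that for all a ≥ 1: E[ (M²/(a+M))^p ] ≤ C·a^{p−2}. -/
open MeasureTheory Real

lemma aux_pointwise_9 {x a p : ℝ} (hx : 0 ≤ x) (ha : 1 ≤ a)
    (hp1 : 1 < p) (hp2 : p < 2) :
    (x ^ 2 / (a + x)) ^ p ≤ x ^ 2 * a ^ (p - 2) := by
  have ha0 : (0:ℝ) < a := lt_of_lt_of_le one_pos ha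
  have hax : (0:ℝ) < a + x := by linarith
  rcases eq_or_lt_of_le hx with h0 | hx0
  · rw [← h0]
    simp only [ne_eq, OfNat.ofNat_ne_zero, not_false_iff, zero_pow, zero_div]
    rw [Real.zero_rpow (by linarith)]
    positivity
  · have hx2 : (0:ℝ) < x ^ 2 := by positivity
    have hkey : x ^ (2 * p) ≤ x ^ 2 * a ^ (p - 2) * (a + x) ^ p := by
      rcases le_total x a with hxa | hax2
      · have h1 : x ^ (2 * p) = x ^ 2 * x ^ (2 * p - 2) := by
          rw [← Real.rpow_natCast x 2, ← Real.rpow_add hx0]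
          norm_num
        have h2 : x ^ (2 * p - 2) ≤ a ^ (2 * p - 2) :=
          Real.rpow_le_rpow hx hxa (by linarith)
        have h3 : a ^ (2 * p - 2) = a ^ (p - 2) * a ^ p := by
          rw [← Real.rpow_add ha0]; ring_nf
        have h4 : a ^ p ≤ (a + x) ^ p :=
          Real.rpow_le_rpow ha0.le (by linarith) (by linarith)
        calc x ^ (2 * p) = x ^ 2 * x ^ (2 * p - 2) := h1
          _ ≤ x ^ 2 * (a ^ (p - 2) * a ^ p) := by
              rw [← h3]; exact mul_le_mul_of_nonneg_left h2 hx2.le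
          _ ≤ x ^ 2 * a ^ (p - 2) * (a + x) ^ p := by
              rw [mul_assoc]
              refine mul_le_mul_of_nonneg_left ?_ hx2.le
              exact mul_le_mul_of_nonneg_left h4 (by positivity)
      · have h1 : x ^ (2 * p) = x ^ 2 * x ^ (p - 2) * x ^ p := by
          rw [← Real.rpow_natCast x 2, ← Real.rpow_add hx0, ← Real.rpow_add hx0]
          norm_num; ring_nf
        have h2 : x ^ (p - 2) ≤ a ^ (p - 2) :=
          Real.rpow_le_rpow_of_nonpos ha0 hax2 (by linarith)
        have h4 : x ^ p ≤ (a + x) ^ p :=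
          Real.rpow_le_rpow hx (by linarith) (by linarith)
        calc x ^ (2 * p) = x ^ 2 * x ^ (p - 2) * x ^ p := h1
          _ ≤ x ^ 2 * a ^ (p - 2) * (a + x) ^ p := by
              have := mul_le_mul (mul_le_mul_of_nonneg_left h2 hx2.le) h4
                (Real.rpow_nonneg hx0.le p) (by positivity)
              exact this
    have hLHS : (x ^ 2 / (a + x)) ^ p = x ^ (2 * p) / (a + x) ^ p := by
      rw [Real.div_rpow (by positivity) hax.le, ← Real.rpow_natCast x 2,
        ← Real.rpow_mul hx]
      norm_num
    rw [hLHS, div_le_iff₀ (by positivity)]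
    exact hkey

theorem stmt_9 {Ω : Type*} [MeasurableSpace Ω] (μ : Measure Ω)
    [IsProbabilityMeasure μ]
    (M : Ω → ℝ) (hmeas : Measurable M) (hnn : ∀ ω, 0 ≤ M ω)
    (hM2 : Integrable (fun ω => M ω ^ 2) μ)
    (p : ℝ) (hp1 : 1 < p) (hp2 : p < 2) :
    ∃ C : ℝ, 0 < C ∧ ∀ a : ℝ, 1 ≤ a →
      ∫⁻ ω, ENNReal.ofReal ((M ω ^ 2 / (a + M ω)) ^ p) ∂μ ≤
        ENNReal.ofReal (C * a ^ (p - 2)) := by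
  set I : ℝ := ∫ ω, M ω ^ 2 ∂μ with hI
  have hInn : 0 ≤ I := integral_nonneg fun ω => by positivity
  refine ⟨I + 1, by linarith, fun a ha => ?_⟩
  have ha0 : (0:ℝ) < a := lt_of_lt_of_le one_pos ha
  have step1 : ∫⁻ ω, ENNReal.ofReal ((M ω ^ 2 / (a + M ω)) ^ p) ∂μ ≤
      ∫⁻ ω, ENNReal.ofReal (M ω ^ 2 * a ^ (p - 2)) ∂μ := by
    refine lintegral_mono fun ω => ENNReal.ofReal_le_ofReal ?_
    exact aux_pointwise_9 (hnn ω) ha hp1 hp2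
  have step2 : ∫⁻ ω, ENNReal.ofReal (M ω ^ 2 * a ^ (p - 2)) ∂μ =
      ENNReal.ofReal (I * a ^ (p - 2)) := by
    have heq : ∀ ω, ENNReal.ofReal (M ω ^ 2 * a ^ (p - 2)) =
        ENNReal.ofReal (M ω ^ 2) * ENNReal.ofReal (a ^ (p - 2)) := fun ω =>
      ENNReal.ofReal_mul (by positivity)
    simp_rw [heq]
    rw [lintegral_mul_const _ (by fun_prop)]
    rw [← ofReal_integral_eq_lintegral_ofReal hM2
      (Filter.Eventually.of_forall fun ω => by positivity)]
    rw [← ENNReal.ofReal_mul hInn]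
  calc ∫⁻ ω, ENNReal.ofReal ((M ω ^ 2 / (a + M ω)) ^ p) ∂μ
      ≤ ENNReal.ofReal (I * a ^ (p - 2)) := step1.trans step2.le
    _ ≤ ENNReal.ofReal ((I + 1) * a ^ (p - 2)) := by
        refine ENNReal.ofReal_le_ofReal ?_
        have : (0:ℝ) ≤ a ^ (p - 2) := Real.rpow_nonneg ha0.le _
        nlinarith
end

section
/- Let (u_n)_{n≥1} be a non-increasing sequence of positive real numbers and let C > 0 be such that for all sufficiently large n one has u_n / u_{n−1} ≥ 1 − C/(n−1). Let (k_n)_{n≥1} be a sequence of non-negative integers with k_n < n for all n and k_n/n → 0 as n → ∞. Then u_n / u_{n−k_n} → 1 as n → ∞. -/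
open Filter

lemma alg_step (p q X m' : ℝ) (hm' : 0 ≤ m') (hq0 : 0 ≤ q) (hqp : q ≤ p) (hp1 : p ≤ 1)
    (hX : 0 < X) (hm : 1 - m' * p ≤ X) : 1 - (m' + 1) * p ≤ (1 - q) * X := by
  have hp0 : 0 ≤ p := le_trans hq0 hqp
  by_cases hcase : 0 ≤ 1 - m' * p
  · nlinarith [mul_le_mul_of_nonneg_left hm (by linarith : (0:ℝ) ≤ 1 - q),
      mul_le_mul_of_nonneg_right (by linarith : 1 - p ≤ 1 - q) hcase,
      mul_nonneg hm' (mul_self_nonneg p)]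
  · nlinarith [mul_nonneg (by linarith : (0:ℝ) ≤ 1 - q) hX.le]

lemma key_prod (u : ℕ → ℝ) (hpos : ∀ n, 0 < u n) (C : ℝ) (hC : 0 < C)
    (a : ℕ) (ha : 1 ≤ a) (hCa : C ≤ (a : ℝ)) :
    ∀ m : ℕ, (∀ j, a < j → j ≤ a + m → 1 - C / ((j : ℝ) - 1) ≤ u j / u (j - 1)) →
      1 - (m : ℝ) * C / a ≤ u (a + m) / u a := by
  have ha' : (0 : ℝ) < a := by exact_mod_cast ha
  intro m
  induction m with
  | zero =>
      intro _
      simp [div_self (hpos a).ne']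
  | succ m ih =>
      intro h
      have hm := ih (fun j hj1 hj2 => h j hj1 (by omega))
      have hj := h (a + m + 1) (by omega) (by omega)
      have hcast : ((a + m + 1 : ℕ) : ℝ) - 1 = (a : ℝ) + m := by push_cast; ring
      have hsub : (a + m + 1) - 1 = a + m := by omega
      rw [hcast, hsub] at hj
      have hX : 0 < u (a + m) / u a := div_pos (hpos _) (hpos _)
      have ham : (0 : ℝ) < (a : ℝ) + m := by positivity
      have hqp : C / ((a : ℝ) + m) ≤ C / a :=
        div_le_div_of_nonneg_left hC.le ha' (by linarith [Nat.cast_nonneg (α := ℝ) m])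
      have hp1 : C / (a : ℝ) ≤ 1 := (div_le_one ha').2 hCa
      have hq0 : 0 ≤ 1 - C / ((a : ℝ) + m) := by linarith
      have step : (1 - C / ((a : ℝ) + m)) * (u (a + m) / u a) ≤ u (a + m + 1) / u a := by
        have := mul_le_mul_of_nonneg_right hj hX.le
        calc (1 - C / ((a : ℝ) + m)) * (u (a + m) / u a)
            ≤ (u (a + m + 1) / u (a + m)) * (u (a + m) / u a) := this
          _ = u (a + m + 1) / u a := by
              rw [div_mul_div_comm, mul_comm (u (a + m + 1)),
                mul_div_mul_left _ _ (hpos (a + m)).ne']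
      refine le_trans ?_ step
      push_cast
      rw [mul_div_assoc]
      exact alg_step (C / (a : ℝ)) (C / ((a : ℝ) + m)) _ m (Nat.cast_nonneg m)
        (div_nonneg hC.le ham.le) hqp hp1 hX (by rw [← mul_div_assoc]; exact hm)

theorem stmt_11 (u : ℕ → ℝ) (hpos : ∀ n, 0 < u n)
    (hmono : ∀ n, u (n + 1) ≤ u n)
    (C : ℝ) (hC : 0 < C)
    (hratio : ∀ᶠ n : ℕ in atTop, 1 - C / ((n : ℝ) - 1) ≤ u n / u (n - 1))
    (k : ℕ → ℕ) (hk : ∀ n, 1 ≤ n → k n < n)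
    (hklim : Tendsto (fun n : ℕ => (k n : ℝ) / n) atTop (nhds 0)) :
    Tendsto (fun n : ℕ => u n / u (n - k n)) atTop (nhds 1) := by
  have hanti : Antitone u := antitone_nat_of_succ_le hmono
  obtain ⟨N, hN⟩ := eventually_atTop.1 hratio
  -- lower bound tends to 1
  have hg : Tendsto (fun n : ℕ => 1 - 2 * C * ((k n : ℝ) / n)) atTop (nhds 1) := by
    have := (tendsto_const_nhds : Tendsto (fun _ : ℕ => (1 : ℝ)) atTop (nhds 1)).sub
      (hklim.const_mul (2 * C))
    simpa using this
  refine tendsto_of_tendsto_of_tendsto_of_le_of_le' hg tendsto_const_nhds ?_ ?_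
  · -- eventual lower bound
    have h2 : ∀ᶠ n : ℕ in atTop, (k n : ℝ) / n < 1 / 2 :=
      hklim.eventually (eventually_lt_nhds (by norm_num))
    filter_upwards [h2, eventually_ge_atTop (2 * N + 1),
      eventually_ge_atTop (2 * ⌈C⌉₊ + 1)] with n hhalf hn1 hn2
    have hn0 : 1 ≤ n := by omega
    have hkn : k n < n := hk n hn0
    have hnpos : (0 : ℝ) < n := by exact_mod_cast Nat.pos_of_ne_zero (by omega)
    have h2k : 2 * k n < n := by
      have := (div_lt_iff₀ hnpos).1 hhalf
      have : (2 * k n : ℝ) < n := by push_cast; linarith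
      exact_mod_cast this
    set a := n - k n with hadef
    have haan : a + k n = n := by omega
    have h2a : n + 1 ≤ 2 * a := by omega
    have haC : ⌈C⌉₊ + 1 ≤ a := by omega
    have ha1 : 1 ≤ a := by omega
    have haR : C ≤ (a : ℝ) := by
      calc C ≤ (⌈C⌉₊ : ℝ) := Nat.le_ceil C
        _ ≤ (a : ℝ) := by exact_mod_cast Nat.le_of_succ_le haC
    have haN : N ≤ a := by omega
    have hlow := key_prod u hpos C hC a ha1 haR (k n)
      (fun j hj1 _ => hN j (by omega)) 
    rw [haan] at hlow
    have hapos : (0 : ℝ) < a := by exact_mod_cast ha1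
    refine le_trans ?_ hlow
    -- 1 - 2C (k n / n) ≤ 1 - k n * C / a  ⟺  k n * C / a ≤ 2 C k n / n
    have h2aR : (n : ℝ) ≤ 2 * a := by exact_mod_cast Nat.le_of_succ_le h2a
    have hk0 : (0 : ℝ) ≤ (k n : ℝ) := Nat.cast_nonneg _
    have : (k n : ℝ) * C / a ≤ 2 * C * ((k n : ℝ) / n) := by
      have h1 : 2 * C * ((k n : ℝ) / n) = (2 * C * (k n : ℝ)) / n := by ring
      rw [h1, div_le_div_iff₀ hapos hnpos]
      nlinarith [mul_nonneg (mul_nonneg hC.le hk0) (show (0:ℝ) ≤ 2 * a - n by linarith)]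
    linarith
  · -- upper bound
    filter_upwards with n
    exact div_le_one_of_le₀ (hanti (Nat.sub_le n (k n))) (hpos _).le
end

section
/- Let ξ₁, …, ξ_k be independent non-negative random variables on a probability space, each with 0 < E[ξᵢ] < ∞, and let a₁, …, a_k be positive real numbers. Let φ : [0,∞) → [0,∞) be a convex, continuously differentiable function such that for some constants C > 0 and q ≥ 1 one has φ(x) ≤ C(1 + x^q) for all x ≥ 0, and assume E[ξᵢ^q] < ∞ for each i. Then E[ φ( Σᵢ aᵢ · (ξᵢ/(1+ξᵢ)) / E[ξᵢ/(1+ξᵢ)] ) ] ≤ E[ φ( Σᵢ aᵢ · ξᵢ / E[ξᵢ] ) ]. -/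
/-!
Write `g x = x / (1 + x)`, `m = E ξ` and `n = E g(ξ) ≤ m`. Replacing the summands one at a time,
independence and Fubini reduce the claim to a fixed shift `t ≥ 0` and a single variable:
`E φ(t + a g(ξ)/n) ≤ E φ(t + a ξ/m)`. The two arguments `U`, `V` have the same mean and cross
only once, at `ξ = (m - n)/n`: with `c = t + a (m - n)/(n m)`, either `c ≤ U ≤ V` or `V ≤ U ≤ c`.
In both cases the tangent of the convex `φ` at `c` gives `φ U ≤ φ V - φ'(c) (V - U)`, and the
correction term has expectation zero.
-/

open MeasureTheory ProbabilityTheory Real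

open Set Function

section

variable {Ω : Type*} [MeasurableSpace Ω] {μ : Measure Ω}

theorem ConvexOn.derivWithin_mul_sub_le_sub {S : Set ℝ} {Φ : ℝ → ℝ} (hΦ : ConvexOn ℝ S Φ)
    (hd : DifferentiableOn ℝ Φ S) {c x y : ℝ} (hc : c ∈ S) (hx : x ∈ S)
    (hcross : c ≤ y ∧ y ≤ x ∨ x ≤ y ∧ y ≤ c) :
    derivWithin Φ S c * (x - y) ≤ Φ x - Φ y := by
  rcases hcross with ⟨hcy, hyx⟩ | ⟨hxy, hyc⟩
  · have hy : y ∈ S := hΦ.1.ordConnected.out hc hx ⟨hcy, hyx⟩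
    rcases hyx.eq_or_lt with rfl | hyx
    · simp
    have hslope := hΦ.derivWithin_le_slope hy hx hyx (hd y hy)
    rw [slope_def_field, le_div_iff₀ (sub_pos.2 hyx)] at hslope
    calc derivWithin Φ S c * (x - y) ≤ derivWithin Φ S y * (x - y) :=
          mul_le_mul_of_nonneg_right (hΦ.monotoneOn_derivWithin hd hc hy hcy) (sub_nonneg.2 hyx.le)
      _ ≤ Φ x - Φ y := hslope
  · have hy : y ∈ S := hΦ.1.ordConnected.out hx hc ⟨hxy, hyc⟩
    rcases hxy.eq_or_lt with rfl | hxy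
    · simp
    have hslope := hΦ.slope_le_derivWithin hx hy hxy (hd y hy)
    rw [slope_def_field, div_le_iff₀ (sub_pos.2 hxy)] at hslope
    have hmono := hΦ.monotoneOn_derivWithin hd hy hc hyc
    nlinarith

theorem integral_comp_le_of_crossing {S : Set ℝ} {Φ : ℝ → ℝ} (hΦ : ConvexOn ℝ S Φ)
    (hd : DifferentiableOn ℝ Φ S) {U V : Ω → ℝ} {c : ℝ} (hc : c ∈ S) (hV : ∀ ω, V ω ∈ S)
    (hcross : ∀ ω, c ≤ U ω ∧ U ω ≤ V ω ∨ V ω ≤ U ω ∧ U ω ≤ c)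
    (hUi : Integrable U μ) (hVi : Integrable V μ) (hUV : ∫ ω, U ω ∂μ = ∫ ω, V ω ∂μ)
    (hΦU : Integrable (fun ω => Φ (U ω)) μ) (hΦV : Integrable (fun ω => Φ (V ω)) μ) :
    ∫ ω, Φ (U ω) ∂μ ≤ ∫ ω, Φ (V ω) ∂μ := by
  set s := derivWithin Φ S c
  have htangent : ∀ ω, Φ (U ω) ≤ Φ (V ω) - s * (V ω - U ω) := fun ω => by
    linarith [hΦ.derivWithin_mul_sub_le_sub hd hc (hV ω) (hcross ω)]
  have hcorr : Integrable (fun ω => s * (V ω - U ω)) μ := (hVi.sub hUi).const_mul s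
  have hmean : ∫ ω, s * (V ω - U ω) ∂μ = 0 := by
    rw [integral_const_mul, integral_sub hVi hUi, hUV, sub_self, mul_zero]
  calc ∫ ω, Φ (U ω) ∂μ ≤ ∫ ω, (Φ (V ω) - s * (V ω - U ω)) ∂μ :=
        integral_mono hΦU (hΦV.sub hcorr) htangent
    _ = ∫ ω, Φ (V ω) ∂μ := by rw [integral_sub hΦV hcorr, hmean, sub_zero]

theorem div_one_add_div_crossing {m n x : ℝ} (hn : 0 < n) (hnm : n ≤ m) (hx : 0 ≤ x) :
    (m - n) / (n * m) ≤ x / (1 + x) / n ∧ x / (1 + x) / n ≤ x / m ∨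
      x / m ≤ x / (1 + x) / n ∧ x / (1 + x) / n ≤ (m - n) / (n * m) := by
  have hm : 0 < m := hn.trans_le hnm
  rw [div_div, div_le_div_iff₀ (by positivity) (by positivity), div_le_div_iff₀ (by positivity) hm,
    div_le_div_iff₀ hm (by positivity), div_le_div_iff₀ (by positivity) (by positivity)]
  rcases le_total (m - n) (n * x) with h | h
  · left; constructor <;> nlinarith
  · right; constructor <;> nlinarith

section OneAdd

variable {X : Ω → ℝ}

theorem div_one_add_nonneg {x : ℝ} (hx : 0 ≤ x) : 0 ≤ x / (1 + x) := by positivity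

theorem div_one_add_le_self {x : ℝ} (hx : 0 ≤ x) : x / (1 + x) ≤ x :=
  div_le_self hx (by linarith)

theorem div_one_add_le_one {x : ℝ} (hx : 0 ≤ x) : x / (1 + x) ≤ 1 :=
  (div_le_one (by linarith)).2 (by linarith)

theorem memLp_div_one_add [IsFiniteMeasure μ] (hX : Measurable X) (hX0 : ∀ ω, 0 ≤ X ω)
    {p : ENNReal} : MemLp (fun ω => X ω / (1 + X ω)) p μ :=
  MemLp.of_bound (hX.div (measurable_const.add hX)).aestronglyMeasurable 1 (ae_of_all _ fun ω => by
    rw [Real.norm_of_nonneg (div_one_add_nonneg (hX0 ω))]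
    exact div_one_add_le_one (hX0 ω))

theorem integrable_div_one_add (hX : Measurable X) (hX0 : ∀ ω, 0 ≤ X ω) (hXi : Integrable X μ) :
    Integrable (fun ω => X ω / (1 + X ω)) μ := by
  refine hXi.mono (hX.div (measurable_const.add hX)).aestronglyMeasurable (ae_of_all _ fun ω => ?_)
  rw [Real.norm_of_nonneg (div_one_add_nonneg (hX0 ω)), Real.norm_of_nonneg (hX0 ω)]
  exact div_one_add_le_self (hX0 ω)

theorem integral_div_one_add_le (hX0 : ∀ ω, 0 ≤ X ω) (hXi : Integrable X μ) :
    ∫ ω, X ω / (1 + X ω) ∂μ ≤ ∫ ω, X ω ∂μ :=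
  integral_mono_of_nonneg (ae_of_all _ fun ω => div_one_add_nonneg (hX0 ω)) hXi
    (ae_of_all _ fun ω => div_one_add_le_self (hX0 ω))

theorem integral_div_one_add_pos_s13 (hX : Measurable X) (hX0 : ∀ ω, 0 ≤ X ω)
    (hXi : Integrable X μ) (hpos : 0 < ∫ ω, X ω ∂μ) :
    0 < ∫ ω, X ω / (1 + X ω) ∂μ := by
  have hsupp : support (fun ω => X ω / (1 + X ω)) = support X := by
    ext ω
    have h1 : 1 + X ω ≠ 0 := by linarith [hX0 ω]
    simp [h1]
  rw [integral_pos_iff_support_of_nonneg (fun ω => hX0 ω) hXi] at hpos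
  rwa [integral_pos_iff_support_of_nonneg (fun ω => div_one_add_nonneg (hX0 ω))
    (integrable_div_one_add hX hX0 hXi), hsupp]

theorem integral_comp_add_div_one_add_le [IsProbabilityMeasure μ] {Φ : ℝ → ℝ}
    (hΦ : ConvexOn ℝ (Ici 0) Φ) (hd : DifferentiableOn ℝ Φ (Ici 0))
    (hX : Measurable X) (hX0 : ∀ ω, 0 ≤ X ω) (hXi : Integrable X μ) (hpos : 0 < ∫ ω, X ω ∂μ)
    {t a : ℝ} (ht : 0 ≤ t) (ha : 0 ≤ a)
    (hΦU : Integrable (fun ω => Φ (t + a * (X ω / (1 + X ω) / ∫ ω', X ω' / (1 + X ω') ∂μ))) μ)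
    (hΦV : Integrable (fun ω => Φ (t + a * (X ω / ∫ ω', X ω' ∂μ))) μ) :
    ∫ ω, Φ (t + a * (X ω / (1 + X ω) / ∫ ω', X ω' / (1 + X ω') ∂μ)) ∂μ ≤
      ∫ ω, Φ (t + a * (X ω / ∫ ω', X ω' ∂μ)) ∂μ := by
  set m := ∫ ω, X ω ∂μ
  set n := ∫ ω, X ω / (1 + X ω) ∂μ
  have hn : 0 < n := integral_div_one_add_pos_s13 hX hX0 hXi hpos
  have hgi := integrable_div_one_add hX hX0 hXi
  refine integral_comp_le_of_crossing hΦ hd (c := t + a * ((m - n) / (n * m))) ?_ ?_ ?_ ?_ ?_ ?_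
    hΦU hΦV
  · have hc : 0 ≤ (m - n) / (n * m) :=
      div_nonneg (sub_nonneg.2 (integral_div_one_add_le hX0 hXi)) (mul_pos hn hpos).le
    exact mem_Ici.2 (by positivity)
  · exact fun ω => mem_Ici.2 (by have hXω := hX0 ω; positivity)
  · intro ω
    rcases div_one_add_div_crossing hn (integral_div_one_add_le hX0 hXi) (hX0 ω) with
      ⟨h₁, h₂⟩ | ⟨h₁, h₂⟩
    · left; constructor <;> gcongr
    · right; constructor <;> gcongr
  · exact (integrable_const t).add ((hgi.div_const n).const_mul a)
  · exact (integrable_const t).add ((hXi.div_const m).const_mul a)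
  · rw [integral_add (integrable_const t) ((hgi.div_const n).const_mul a),
      integral_add (integrable_const t) ((hXi.div_const m).const_mul a),
      integral_const_mul, integral_const_mul, integral_div, integral_div, div_self hn.ne',
      div_self hpos.ne']

end OneAdd

theorem ProbabilityTheory.iIndepFun.indepFun_finsetSum_comp_of_notMem {ι β : Type*}
    [MeasurableSpace β] {ξ : ι → Ω → β} (hind : iIndepFun ξ μ) (hξ : ∀ i, Measurable (ξ i))
    {w : ι → β → ℝ} (hw : ∀ i, Measurable (w i)) {s : Finset ι} {j : ι} (hj : j ∉ s) :
    IndepFun (fun ω => ∑ i ∈ s, w i (ξ i ω)) (ξ j) μ := by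
  have h := (hind.indepFun_finset s {j} (Finset.disjoint_singleton_right.2 hj) hξ).comp
    (φ := fun x : s → β => ∑ i : s, w i (x i))
    (ψ := fun x : ({j} : Finset ι) → β => x ⟨j, Finset.mem_singleton_self j⟩)
    (Finset.measurable_sum _ fun i _ => (hw i).comp (measurable_pi_apply i))
    (_mγ' := ‹MeasurableSpace β›) (measurable_pi_apply _)
  convert h using 1
  · funext ω
    exact (Finset.sum_coe_sort s fun i => w i (ξ i ω)).symm
  · rfl

theorem ProbabilityTheory.IndepFun.integral_comp_le {α β : Type*} [MeasurableSpace α]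
    [MeasurableSpace β] [IsFiniteMeasure μ] {T : Ω → α} {X : Ω → β} (hTX : IndepFun T X μ)
    (hT : Measurable T) (hX : Measurable X) {F G : α → β → ℝ} (hF : Measurable (uncurry F))
    (hG : Measurable (uncurry G)) (hFi : Integrable (fun ω => F (T ω) (X ω)) μ)
    (hGi : Integrable (fun ω => G (T ω) (X ω)) μ)
    (hle : ∀ᵐ t ∂μ.map T, ∫ ω, F t (X ω) ∂μ ≤ ∫ ω, G t (X ω) ∂μ) :
    ∫ ω, F (T ω) (X ω) ∂μ ≤ ∫ ω, G (T ω) (X ω) ∂μ := by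
  have hmap := hTX.map_prod_eq_prod_map_map hT.aemeasurable hX.aemeasurable
  have hpair : AEMeasurable (fun ω => (T ω, X ω)) μ := (hT.prodMk hX).aemeasurable
  have hprod : ∀ H : α → β → ℝ, Measurable (uncurry H) →
      Integrable (fun ω => H (T ω) (X ω)) μ →
      Integrable (uncurry H) ((μ.map T).prod (μ.map X)) ∧
        ∫ ω, H (T ω) (X ω) ∂μ = ∫ t, ∫ x, H t x ∂μ.map X ∂μ.map T := by
    intro H hH hHi
    have hHi' := (integrable_map_measure hH.aestronglyMeasurable hpair).2 hHi
    rw [hmap] at hHi'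
    refine ⟨hHi', ?_⟩
    change ∫ ω, uncurry H (T ω, X ω) ∂μ = _
    rw [← integral_map hpair hH.aestronglyMeasurable, hmap, integral_prod _ hHi']
    rfl
  have hinner : ∀ H : α → β → ℝ, Measurable (uncurry H) →
      ∀ t, ∫ x, H t x ∂μ.map X = ∫ ω, H t (X ω) ∂μ := fun H hH t =>
    integral_map hX.aemeasurable (hH.comp measurable_prodMk_left).aestronglyMeasurable
  obtain ⟨hFi', hFeq⟩ := hprod F hF hFi
  obtain ⟨hGi', hGeq⟩ := hprod G hG hGi
  rw [hFeq, hGeq]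
  refine integral_mono_ae hFi'.integral_prod_left hGi'.integral_prod_left ?_
  filter_upwards [hle] with t ht
  rwa [hinner F hF, hinner G hG]

theorem integral_comp_sum_le_of_iIndepFun {ι β : Type*} [Fintype ι] [DecidableEq ι]
    [MeasurableSpace β] {ξ : ι → Ω → β} (hξ : ∀ i, Measurable (ξ i)) (hind : iIndepFun ξ μ)
    {Φ : ℝ → ℝ} (hΦ : Measurable Φ) {u v : ι → β → ℝ} (hu : ∀ i, Measurable (u i))
    (hv : ∀ i, Measurable (v i)) (hu0 : ∀ i ω, 0 ≤ u i (ξ i ω)) (hv0 : ∀ i ω, 0 ≤ v i (ξ i ω))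
    (hint : ∀ s : Finset ι, Integrable (fun ω => Φ (∑ i, s.piecewise u v i (ξ i ω))) μ)
    (hstep : ∀ i t, 0 ≤ t → ∫ ω, Φ (t + u i (ξ i ω)) ∂μ ≤ ∫ ω, Φ (t + v i (ξ i ω)) ∂μ) :
    ∫ ω, Φ (∑ i, u i (ξ i ω)) ∂μ ≤ ∫ ω, Φ (∑ i, v i (ξ i ω)) ∂μ := by
  have := hind.isProbabilityMeasure
  suffices ∀ s : Finset ι,
      ∫ ω, Φ (∑ i, s.piecewise u v i (ξ i ω)) ∂μ ≤ ∫ ω, Φ (∑ i, v i (ξ i ω)) ∂μ by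
    simpa using this Finset.univ
  intro s
  induction s using Finset.induction_on with
  | empty => simp
  | insert j s hj ih =>
    refine le_trans ?_ ih
    set w := s.piecewise u v
    have hw : ∀ i, Measurable (w i) := fun i => s.piecewise_cases u v Measurable (hu i) (hv i)
    have hw0 : ∀ i ω, 0 ≤ w i (ξ i ω) := fun i ω =>
      s.piecewise_cases u v (fun f => 0 ≤ f (ξ i ω)) (hu0 i ω) (hv0 i ω)
    set T : Ω → ℝ := fun ω => ∑ i ∈ Finset.univ.erase j, w i (ξ i ω)
    have hsplit : ∀ (f : ι → β → ℝ) ω,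
        ∑ i, f i (ξ i ω) = ∑ i ∈ Finset.univ.erase j, f i (ξ i ω) + f j (ξ j ω) :=
      fun f ω => (Finset.sum_erase_add _ _ (Finset.mem_univ j)).symm
    have hins : ∀ ω, ∑ i, (insert j s).piecewise u v i (ξ i ω) = T ω + u j (ξ j ω) := by
      intro ω
      rw [hsplit, Finset.piecewise_insert, update_self]
      congr 1
      exact Finset.sum_congr rfl fun i hi => by rw [update_of_ne (Finset.ne_of_mem_erase hi)]
    have hrem : ∀ ω, ∑ i, w i (ξ i ω) = T ω + v j (ξ j ω) := by
      intro ω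
      rw [hsplit, show w j = v j from Finset.piecewise_eq_of_notMem _ _ _ hj]
    have hT : Measurable T := Finset.measurable_sum _ fun i _ => (hw i).comp (hξ i)
    have hT0 : ∀ᵐ t ∂μ.map T, 0 ≤ t :=
      (ae_map_iff hT.aemeasurable measurableSet_Ici).2
        (ae_of_all _ fun ω => Finset.sum_nonneg fun i _ => hw0 i ω)
    simp only [hins, hrem]
    refine (hind.indepFun_finsetSum_comp_of_notMem hξ hw (Finset.notMem_erase j _)).integral_comp_le
      hT (hξ j) (F := fun t x => Φ (t + u j x)) (G := fun t x => Φ (t + v j x))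
      (hΦ.comp (measurable_fst.add ((hu j).comp measurable_snd)))
      (hΦ.comp (measurable_fst.add ((hv j).comp measurable_snd))) ?_ ?_ ?_
    · simpa only [hins] using hint (insert j s)
    · convert hint s using 3 with ω
      exact (hrem ω).symm
    · filter_upwards [hT0] with t ht using hstep j t ht

theorem memLp_ofReal_iff_integrable_rpow {S : Ω → ℝ} (hS : AEStronglyMeasurable S μ)
    (hS0 : ∀ ω, 0 ≤ S ω) {q : ℝ} (hq : 0 < q) :
    MemLp S (ENNReal.ofReal q) μ ↔ Integrable (fun ω => S ω ^ q) μ := by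
  rw [← integrable_norm_rpow_iff hS (by simpa using hq) ENNReal.ofReal_ne_top,
    ENNReal.toReal_ofReal hq.le]
  simp only [Real.norm_of_nonneg (hS0 _)]

theorem integrable_comp_of_le_one_add_rpow [IsFiniteMeasure μ] {Φ : ℝ → ℝ} (hΦ : Measurable Φ)
    {C q : ℝ} (hq : 0 < q) (hΦ0 : ∀ x, 0 ≤ x → 0 ≤ Φ x)
    (hΦC : ∀ x, 0 ≤ x → Φ x ≤ C * (1 + x ^ q)) {S : Ω → ℝ} (hS0 : ∀ ω, 0 ≤ S ω)
    (hS : MemLp S (ENNReal.ofReal q) μ) :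
    Integrable (fun ω => Φ (S ω)) μ := by
  have hSq := (memLp_ofReal_iff_integrable_rpow hS.1 hS0 hq).1 hS
  refine Integrable.mono' (g := fun ω => C * (1 + S ω ^ q))
    (((integrable_const 1).add hSq).const_mul C)
    (hΦ.comp_aemeasurable hS.aestronglyMeasurable.aemeasurable).aestronglyMeasurable
    (ae_of_all _ fun ω => ?_)
  rw [Real.norm_of_nonneg (hΦ0 _ (hS0 ω))]
  exact hΦC _ (hS0 ω)

theorem integral_comp_sum_renorm_div_one_add_le {ι : Type*} [Fintype ι] [IsProbabilityMeasure μ]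
    {ξ : ι → Ω → ℝ} (hmeas : ∀ i, Measurable (ξ i)) (hindep : iIndepFun ξ μ)
    (hnn : ∀ i ω, 0 ≤ ξ i ω) (hint : ∀ i, Integrable (ξ i) μ) (hpos : ∀ i, 0 < ∫ ω, ξ i ω ∂μ)
    {a : ι → ℝ} (ha : ∀ i, 0 ≤ a i) {Φ : ℝ → ℝ} (hΦ : Measurable Φ)
    (hconv : ConvexOn ℝ (Ici 0) Φ) (hd : DifferentiableOn ℝ Φ (Ici 0)) {C q : ℝ} (hq : 0 < q)
    (hΦ0 : ∀ x, 0 ≤ x → 0 ≤ Φ x) (hΦC : ∀ x, 0 ≤ x → Φ x ≤ C * (1 + x ^ q))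
    (hmom : ∀ i, Integrable (fun ω => ξ i ω ^ q) μ) :
    ∫ ω, Φ (∑ i, a i * (ξ i ω / (1 + ξ i ω) / ∫ ω', ξ i ω' / (1 + ξ i ω') ∂μ)) ∂μ ≤
      ∫ ω, Φ (∑ i, a i * (ξ i ω / ∫ ω', ξ i ω' ∂μ)) ∂μ := by
  classical
  set u : ι → ℝ → ℝ := fun i x => a i * (x / (1 + x) / ∫ ω, ξ i ω / (1 + ξ i ω) ∂μ)
  set v : ι → ℝ → ℝ := fun i x => a i * (x / ∫ ω, ξ i ω ∂μ)
  have hn : ∀ i, 0 ≤ ∫ ω, ξ i ω / (1 + ξ i ω) ∂μ := fun i =>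
    integral_nonneg fun ω => div_one_add_nonneg (hnn i ω)
  have hu0 : ∀ i ω, 0 ≤ u i (ξ i ω) := fun i ω =>
    mul_nonneg (ha i) (div_nonneg (div_one_add_nonneg (hnn i ω)) (hn i))
  have hv0 : ∀ i ω, 0 ≤ v i (ξ i ω) := fun i ω =>
    mul_nonneg (ha i) (div_nonneg (hnn i ω) (hpos i).le)
  have hu : ∀ i, MemLp (fun ω => u i (ξ i ω)) (ENNReal.ofReal q) μ := fun i => by
    simpa only [u, div_eq_mul_inv] using
      ((memLp_div_one_add (hmeas i) (hnn i)).mul_const _).const_mul (a i)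
  have hv : ∀ i, MemLp (fun ω => v i (ξ i ω)) (ENNReal.ofReal q) μ := fun i => by
    have hξq := (memLp_ofReal_iff_integrable_rpow (hmeas i).aestronglyMeasurable (hnn i) hq).2
      (hmom i)
    simpa only [v, div_eq_mul_inv] using (hξq.mul_const _).const_mul (a i)
  have hΦint : ∀ S : Ω → ℝ, (∀ ω, 0 ≤ S ω) → MemLp S (ENNReal.ofReal q) μ →
      Integrable (fun ω => Φ (S ω)) μ := fun _ => integrable_comp_of_le_one_add_rpow hΦ hq hΦ0 hΦC
  refine integral_comp_sum_le_of_iIndepFun hmeas hindep hΦ (u := u) (v := v) (by fun_prop)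
    (by fun_prop) hu0 hv0 (fun s => ?_) (fun i t ht => ?_)
  · refine hΦint _ (fun ω => Finset.sum_nonneg fun i _ => ?_) (memLp_finsetSum _ fun i _ => ?_)
    · exact s.piecewise_cases u v (fun f => 0 ≤ f (ξ i ω)) (hu0 i ω) (hv0 i ω)
    · exact s.piecewise_cases u v (fun f => MemLp (fun ω => f (ξ i ω)) _ μ) (hu i) (hv i)
  · exact integral_comp_add_div_one_add_le hconv hd (hmeas i) (hnn i) (hint i) (hpos i) ht (ha i)
      (hΦint _ (fun ω => add_nonneg ht (hu0 i ω)) ((memLp_const t).add (hu i)))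
      (hΦint _ (fun ω => add_nonneg ht (hv0 i ω)) ((memLp_const t).add (hv i)))

end

theorem stmt_13_general {Ω : Type*} [MeasurableSpace Ω] (μ : Measure Ω)
    [IsProbabilityMeasure μ]
    (k : ℕ) (ξ : Fin k → Ω → ℝ)
    (hmeas : ∀ i, Measurable (ξ i))
    (hindep : iIndepFun ξ μ)
    (hnn : ∀ i ω, 0 ≤ ξ i ω)
    (hint : ∀ i, Integrable (ξ i) μ)
    (hpos : ∀ i, 0 < ∫ ω, ξ i ω ∂μ)
    (a : Fin k → ℝ) (ha : ∀ i, 0 < a i)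
    (φ : ℝ → ℝ) (hφnn : ∀ x, 0 ≤ x → 0 ≤ φ x)
    (hconv : ConvexOn ℝ (Set.Ici 0) φ)
    (hdiff : ContDiffOn ℝ 1 φ (Set.Ici 0))
    (C q : ℝ) (hq : 1 ≤ q)
    (hgrowth : ∀ x, 0 ≤ x → φ x ≤ C * (1 + x ^ q))
    (hmom : ∀ i, Integrable (fun ω => ξ i ω ^ q) μ) :
    ∫ ω, φ (∑ i, a i * ((ξ i ω / (1 + ξ i ω)) / ∫ ω', ξ i ω' / (1 + ξ i ω') ∂μ)) ∂μ ≤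
      ∫ ω, φ (∑ i, a i * (ξ i ω / ∫ ω', ξ i ω' ∂μ)) ∂μ := by
  -- `φ` is only constrained on `[0, ∞)`; freezing it at `φ 0` to the left makes it measurable.
  set Φ : ℝ → ℝ := fun x => φ (max x 0)
  have hφΦ : EqOn φ Φ (Ici 0) := fun x hx => by simp [Φ, max_eq_left (mem_Ici.1 hx)]
  have hΦ : Continuous Φ := hdiff.continuousOn.comp_continuous
    (continuous_id.max continuous_const) fun x => le_max_right x 0
  have hsum : ∀ b : Fin k → Ω → ℝ, (∀ i ω, 0 ≤ b i ω) →
      ∫ ω, φ (∑ i, b i ω) ∂μ = ∫ ω, Φ (∑ i, b i ω) ∂μ := fun b hb =>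
    integral_congr_ae (ae_of_all _ fun ω => hφΦ (mem_Ici.2 (Finset.sum_nonneg fun i _ => hb i ω)))
  rw [hsum _ fun i ω => ?_, hsum _ fun i ω => ?_]
  · exact integral_comp_sum_renorm_div_one_add_le hmeas hindep hnn hint hpos (fun i => (ha i).le)
      hΦ.measurable (hconv.congr hφΦ)
      ((hdiff.differentiableOn one_ne_zero).congr fun x hx => (hφΦ hx).symm) (by linarith)
      (fun x hx => hφΦ hx ▸ hφnn x hx) (fun x hx => hφΦ hx ▸ hgrowth x hx) hmom
  · exact mul_nonneg (ha i).le (div_nonneg (hnn i ω) (hpos i).le)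
  · exact mul_nonneg (ha i).le (div_nonneg (div_one_add_nonneg (hnn i ω))
      (integral_nonneg fun ω => div_one_add_nonneg (hnn i ω)))

theorem stmt_13 {Ω : Type*} [MeasurableSpace Ω] (μ : Measure Ω)
    [IsProbabilityMeasure μ]
    (k : ℕ) (ξ : Fin k → Ω → ℝ)
    (hmeas : ∀ i, Measurable (ξ i))
    (hindep : iIndepFun ξ μ)
    (hnn : ∀ i ω, 0 ≤ ξ i ω)
    (hint : ∀ i, Integrable (ξ i) μ)
    (hpos : ∀ i, 0 < ∫ ω, ξ i ω ∂μ)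
    (a : Fin k → ℝ) (ha : ∀ i, 0 < a i)
    (φ : ℝ → ℝ) (hφnn : ∀ x, 0 ≤ x → 0 ≤ φ x)
    (hconv : ConvexOn ℝ (Set.Ici 0) φ)
    (hdiff : ContDiffOn ℝ 1 φ (Set.Ici 0))
    (C q : ℝ) (hC : 0 < C) (hq : 1 ≤ q)
    (hgrowth : ∀ x, 0 ≤ x → φ x ≤ C * (1 + x ^ q))
    (hmom : ∀ i, Integrable (fun ω => ξ i ω ^ q) μ) :
    ∫ ω, φ (∑ i, a i * ((ξ i ω / (1 + ξ i ω)) / ∫ ω', ξ i ω' / (1 + ξ i ω') ∂μ)) ∂μ ≤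
      ∫ ω, φ (∑ i, a i * (ξ i ω / ∫ ω', ξ i ω' ∂μ)) ∂μ :=
  stmt_13_general μ k ξ hmeas hindep hnn hint hpos a ha φ hφnn hconv hdiff C q hq hgrowth hmom
end

section
/- Let α be a positive integer, let L ≥ 0, and let (c_n)_{n≥1} and (u_n)_{n≥1} be non-increasing sequences of positive real numbers. Suppose u_{(r−1)^α} / u_{r^α} → 1 as r → ∞, and c_{r^α} / u_{r^α} → L as r → ∞. Then c_n / u_n → L as n → ∞. -/
open Filter

theorem stmt_14 (α : ℕ) (hα : 0 < α) (L : ℝ) (hL : 0 ≤ L)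
    (c u : ℕ → ℝ)
    (hcpos : ∀ n, 0 < c n) (hupos : ∀ n, 0 < u n)
    (hcmono : ∀ n, c (n + 1) ≤ c n) (humono : ∀ n, u (n + 1) ≤ u n)
    (hu : Tendsto (fun r : ℕ => u ((r - 1) ^ α) / u (r ^ α)) atTop (nhds 1))
    (hc : Tendsto (fun r : ℕ => c (r ^ α) / u (r ^ α)) atTop (nhds L)) :
    Tendsto (fun n : ℕ => c n / u n) atTop (nhds L) := by
  have hca : Antitone c := antitone_nat_of_succ_le hcmono
  have hua : Antitone u := antitone_nat_of_succ_le humono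
  have hex : ∀ n : ℕ, ∃ r, n ≤ r ^ α := fun n => ⟨n, Nat.le_self_pow hα.ne' n⟩
  set R : ℕ → ℕ := fun n => Nat.find (hex n) with hRdef
  have hRle : ∀ n, n ≤ (R n) ^ α := fun n => Nat.find_spec (hex n)
  have hRlb : ∀ n, (R n - 1) ^ α ≤ n := by
    intro n
    rcases Nat.eq_zero_or_pos (R n) with h | h
    · simp [h, Nat.zero_pow hα]
    · have := Nat.find_min (hex n) (show R n - 1 < R n from Nat.sub_lt h one_pos)
      omega
  have hRtop : Tendsto R atTop atTop := by
    apply tendsto_atTop_atTop.2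
    intro b
    refine ⟨b ^ α, fun n hn => ?_⟩
    by_contra hlt
    push_neg at hlt
    have : (R n) ^ α < b ^ α := Nat.pow_lt_pow_left hlt hα.ne'
    have := hRle n
    omega
  -- limits of the bounding sequences
  have hc' : Tendsto (fun r : ℕ => c ((r - 1) ^ α) / u ((r - 1) ^ α)) atTop (nhds L) :=
    hc.comp (tendsto_sub_atTop_nat 1)
  have hinv : Tendsto (fun r : ℕ => u (r ^ α) / u ((r - 1) ^ α)) atTop (nhds 1) := by
    have := hu.inv₀ one_ne_zero
    rw [inv_one] at this
    convert this using 2 with r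
    rw [inv_div]
  have hf : Tendsto (fun r : ℕ => c ((r - 1) ^ α) / u (r ^ α)) atTop (nhds L) := by
    have := hu.mul hc'
    rw [one_mul] at this
    convert this using 2 with r
    rw [div_mul_div_comm, div_eq_div_iff (hupos _).ne' (mul_ne_zero (hupos _).ne' (hupos _).ne')]; ring
  have hg : Tendsto (fun r : ℕ => c (r ^ α) / u ((r - 1) ^ α)) atTop (nhds L) := by
    have := hinv.mul hc
    rw [one_mul] at this
    convert this using 2 with r
    rw [div_mul_div_comm, div_eq_div_iff (hupos _).ne' (mul_ne_zero (hupos _).ne' (hupos _).ne')]; ring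
  refine tendsto_of_tendsto_of_tendsto_of_le_of_le' (hg.comp hRtop) (hf.comp hRtop) ?_ ?_
  · filter_upwards with n
    exact div_le_div₀ (hcpos _).le (hca (hRle n)) (hupos _) (hua (hRlb n))
  · filter_upwards with n
    exact div_le_div₀ (hcpos _).le (hca (hRlb n)) (hupos _) (hua (hRle n))
end
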